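/- arXiv:1402.3879 — 6 statements merged into one kernel-verified Lean document; each statement's English description precedes it below -/
import Mathlib

section
/- Let 0 < r₁ < r₂ and let κ₁, κ₂ > 0 satisfy κ₁ < 1 and κ₁ + κ₂ > 1. Then ∫₀^{r₁} (r₁ − r)^{−κ₁} (r₂ − r)^{−κ₂} dr ≤ C (r₂ − r₁)^{1 − κ₁ − κ₂}, where the constant can be taken to be C = 1/(1 − κ₁) + 1/(κ₁ + κ₂ − 1). -/
/-!
Substitute `t = r₁ - r`, enlarge the domain to `(0, ∞)` and put `δ = r₂ - r₁`, so that the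
integrand becomes `t ^ (-κ₁) * (t + δ) ^ (-κ₂)`. On `(0, δ]` bound `(t + δ) ^ (-κ₂)` by
`δ ^ (-κ₂)`, on `(δ, ∞)` by `t ^ (-κ₂)`; the two remaining power integrals give the two terms
of the constant.
-/

open MeasureTheory Set

theorem setLIntegral_Iio_comp_sub_left (f : ℝ → ENNReal) (c : ℝ) :
    ∫⁻ r in Iio c, f (c - r) = ∫⁻ t in Ioi 0, f t := by
  simpa using (volume.measurePreserving_sub_left c).setLIntegral_comp_preimage_emb
    (Homeomorph.subLeft c).measurableEmbedding f (Ioi 0)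

theorem lintegral_Ioc_zero_rpow_neg {δ κ : ℝ} (hδ : 0 ≤ δ) (hκ : κ < 1) :
    ∫⁻ t in Ioc 0 δ, ENNReal.ofReal (t ^ (-κ)) = ENNReal.ofReal (δ ^ (1 - κ) / (1 - κ)) := by
  have hint : IntegrableOn (fun t : ℝ ↦ t ^ (-κ)) (Ioc 0 δ) :=
    (intervalIntegrable_iff_integrableOn_Ioc_of_le hδ).mp
      (intervalIntegral.intervalIntegrable_rpow' (by linarith))
  rw [← ofReal_integral_eq_lintegral_ofReal hint
    (ae_restrict_of_forall_mem measurableSet_Ioc fun t ht ↦ Real.rpow_nonneg ht.1.le _),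
    ← intervalIntegral.integral_of_le hδ, integral_rpow (Or.inl (by linarith)),
    Real.zero_rpow (by linarith), sub_zero, neg_add_eq_sub]

theorem lintegral_Ioi_rpow_neg {δ κ : ℝ} (hδ : 0 < δ) (hκ : 1 < κ) :
    ∫⁻ t in Ioi δ, ENNReal.ofReal (t ^ (-κ)) = ENNReal.ofReal (δ ^ (1 - κ) / (κ - 1)) := by
  rw [← ofReal_integral_eq_lintegral_ofReal (integrableOn_Ioi_rpow_of_lt (by linarith) hδ)
    (ae_restrict_of_forall_mem measurableSet_Ioi fun t ht ↦ Real.rpow_nonneg (hδ.trans ht).le _),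
    integral_Ioi_rpow_of_lt (by linarith) hδ, neg_add_eq_sub, neg_div, ← div_neg, neg_sub]

theorem lintegral_Ioi_rpow_mul_add_rpow_le {δ κ₁ κ₂ : ℝ} (hδ : 0 < δ) (hκ₁ : κ₁ < 1)
    (hκ : 1 < κ₁ + κ₂) :
    ∫⁻ t in Ioi 0, ENNReal.ofReal (t ^ (-κ₁) * (t + δ) ^ (-κ₂)) ≤
      ENNReal.ofReal ((1 / (1 - κ₁) + 1 / (κ₁ + κ₂ - 1)) * δ ^ (1 - κ₁ - κ₂)) := by
  have hκ₂ : 0 < κ₂ := by linarith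
  have near : ∫⁻ t in Ioc 0 δ, ENNReal.ofReal (t ^ (-κ₁) * (t + δ) ^ (-κ₂)) ≤
      ENNReal.ofReal (1 / (1 - κ₁) * δ ^ (1 - κ₁ - κ₂)) := by
    calc _ ≤ ∫⁻ t in Ioc 0 δ, ENNReal.ofReal (δ ^ (-κ₂)) * ENNReal.ofReal (t ^ (-κ₁)) := by
          refine setLIntegral_mono' measurableSet_Ioc fun t ht ↦ ?_
          rw [← ENNReal.ofReal_mul (Real.rpow_nonneg hδ.le _), mul_comm (δ ^ _)]
          exact ENNReal.ofReal_le_ofReal <| mul_le_mul_of_nonneg_left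
            (Real.rpow_le_rpow_of_nonpos hδ (by linarith [ht.1]) (by linarith))
            (Real.rpow_nonneg ht.1.le _)
      _ = ENNReal.ofReal (δ ^ (-κ₂) * (δ ^ (1 - κ₁) / (1 - κ₁))) := by
          rw [lintegral_const_mul' _ _ ENNReal.ofReal_ne_top, lintegral_Ioc_zero_rpow_neg hδ.le hκ₁,
            ENNReal.ofReal_mul (Real.rpow_nonneg hδ.le _)]
      _ = ENNReal.ofReal (1 / (1 - κ₁) * δ ^ (1 - κ₁ - κ₂)) := by
          rw [mul_div_assoc', ← Real.rpow_add hδ, show -κ₂ + (1 - κ₁) = 1 - κ₁ - κ₂ by ring]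
          ring_nf
  have far : ∫⁻ t in Ioi δ, ENNReal.ofReal (t ^ (-κ₁) * (t + δ) ^ (-κ₂)) ≤
      ENNReal.ofReal (1 / (κ₁ + κ₂ - 1) * δ ^ (1 - κ₁ - κ₂)) := by
    calc _ ≤ ∫⁻ t in Ioi δ, ENNReal.ofReal (t ^ (-(κ₁ + κ₂))) := by
          refine setLIntegral_mono' measurableSet_Ioi fun t ht ↦ ?_
          have ht0 : 0 < t := hδ.trans ht
          rw [neg_add, Real.rpow_add ht0]
          exact ENNReal.ofReal_le_ofReal <| mul_le_mul_of_nonneg_left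
            (Real.rpow_le_rpow_of_nonpos ht0 (by linarith) (by linarith))
            (Real.rpow_nonneg ht0.le _)
      _ = ENNReal.ofReal (1 / (κ₁ + κ₂ - 1) * δ ^ (1 - κ₁ - κ₂)) := by
          rw [lintegral_Ioi_rpow_neg hδ hκ, sub_add_eq_sub_sub]
          ring_nf
  rw [← Ioc_union_Ioi_eq_Ioi hδ.le, lintegral_union measurableSet_Ioi Ioc_disjoint_Ioi_same,
    add_mul, ENNReal.ofReal_add (by positivity) (by positivity)]
  exact add_le_add near far

theorem stmt_0_general (r₁ r₂ κ₁ κ₂ : ℝ) (hr₁₂ : r₁ < r₂)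
    (hκ₁1 : κ₁ < 1) (hκsum : 1 < κ₁ + κ₂) :
    ∫⁻ r in Set.Ioo (0 : ℝ) r₁,
        ENNReal.ofReal ((r₁ - r) ^ (-κ₁) * (r₂ - r) ^ (-κ₂)) ≤
      ENNReal.ofReal
        ((1 / (1 - κ₁) + 1 / (κ₁ + κ₂ - 1)) * (r₂ - r₁) ^ (1 - κ₁ - κ₂)) := by
  calc _ ≤ ∫⁻ r in Iio r₁, ENNReal.ofReal ((r₁ - r) ^ (-κ₁) * (r₂ - r) ^ (-κ₂)) :=
        lintegral_mono_set Ioo_subset_Iio_self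
    _ = ∫⁻ t in Ioi 0, ENNReal.ofReal (t ^ (-κ₁) * (t + (r₂ - r₁)) ^ (-κ₂)) := by
        rw [← setLIntegral_Iio_comp_sub_left _ r₁]
        simp only [sub_add_sub_cancel']
    _ ≤ _ := lintegral_Ioi_rpow_mul_add_rpow_le (sub_pos.mpr hr₁₂) hκ₁1 hκsum

/-- Lemma 6.4 (Lemma `lm03`): for `0 < r₁ < r₂`, `0 < κ₁ < 1`, `κ₂ > 0` with `κ₁ + κ₂ > 1`,
`∫₀^{r₁} (r₁ - r)^{-κ₁} (r₂ - r)^{-κ₂} dr ≤ C (r₂ - r₁)^{1 - κ₁ - κ₂}` with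
`C = 1/(1 - κ₁) + 1/(κ₁ + κ₂ - 1)`. -/
theorem stmt_0 (r₁ r₂ κ₁ κ₂ : ℝ) (hr₁ : 0 < r₁) (hr₁₂ : r₁ < r₂)
    (hκ₁ : 0 < κ₁) (hκ₂ : 0 < κ₂) (hκ₁1 : κ₁ < 1) (hκsum : 1 < κ₁ + κ₂) :
    ∫⁻ r in Set.Ioo (0 : ℝ) r₁,
        ENNReal.ofReal ((r₁ - r) ^ (-κ₁) * (r₂ - r) ^ (-κ₂)) ≤
      ENNReal.ofReal
        ((1 / (1 - κ₁) + 1 / (κ₁ + κ₂ - 1)) * (r₂ - r₁) ^ (1 - κ₁ - κ₂)) :=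
  stmt_0_general r₁ r₂ κ₁ κ₂ hr₁₂ hκ₁1 hκsum
end

section
/- Let 0 < r₁ < r₂ ≤ r₃ and let κ₁, κ₂, κ₃ > 0 satisfy κ₁ + κ₂ < 1 and κ₁ + κ₂ + κ₃ > 1. Then ∫₀^{r₁} (r₁ − r)^{−κ₁} (r₂ − r)^{−κ₂} (r₃ − r)^{−κ₃} dr ≤ C (r₃ − r₁)^{1 − κ₁ − κ₂ − κ₃}, where the constant can be taken to be C = 1/(1 − κ₁ − κ₂) + 1/(κ₁ + κ₂ + κ₃ − 1). -/
/-! With `δ = r₃ - r₁`, split the half-line `r < r₁` at `r₁ - δ`. Since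
`r₁ - r ≤ r₂ - r ≤ r₃ - r`, far from `r₁` the integrand is at most `(r₁ - r) ^ (-(κ₁ + κ₂ + κ₃))`,
integrable at `-∞` because `κ₁ + κ₂ + κ₃ > 1`. Near `r₁` we have `r₃ - r ≥ δ`, so the integrand is
at most `δ ^ (-κ₃) * (r₁ - r) ^ (-(κ₁ + κ₂))`, integrable at `r₁` because `κ₁ + κ₂ < 1`. Each piece
is an explicit multiple of `δ ^ (1 - κ₁ - κ₂ - κ₃)`. -/

open MeasureTheory Set
open scoped ENNReal
open ENNReal (ofReal)

lemma setLIntegral_comp_const_sub (f : ℝ → ℝ≥0∞) (b : ℝ) (s : Set ℝ) :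
    ∫⁻ r in s, f (b - r) = ∫⁻ u in (fun r => b - r) '' s, f u :=
  (Measure.measurePreserving_sub_left volume b).setLIntegral_comp_emb
    (measurableEmbedding_subLeft b) f s

lemma lintegral_Ioo_zero_rpow {d p : ℝ} (hd : 0 ≤ d) (hp : -1 < p) :
    ∫⁻ u in Ioo 0 d, ofReal (u ^ p) = ofReal (d ^ (p + 1) / (p + 1)) := by
  have hint : IntegrableOn (fun u : ℝ => u ^ p) (Ioc 0 d) :=
    (intervalIntegrable_iff_integrableOn_Ioc_of_le hd).mp
      (intervalIntegral.intervalIntegrable_rpow' hp)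
  rw [setLIntegral_congr Ioo_ae_eq_Ioc, ← ofReal_integral_eq_lintegral_ofReal hint
      (ae_restrict_of_forall_mem measurableSet_Ioc fun u hu => Real.rpow_nonneg hu.1.le p),
    ← intervalIntegral.integral_of_le hd, integral_rpow (Or.inl hp),
    Real.zero_rpow (by linarith), sub_zero]

lemma lintegral_Ioi_rpow_of_lt {c p : ℝ} (hc : 0 < c) (hp : p < -1) :
    ∫⁻ u in Ioi c, ofReal (u ^ p) = ofReal (-c ^ (p + 1) / (p + 1)) := by
  rw [← ofReal_integral_eq_lintegral_ofReal (integrableOn_Ioi_rpow_of_lt hp hc)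
      (ae_restrict_of_forall_mem measurableSet_Ioi fun u hu => Real.rpow_nonneg (hc.trans hu).le p),
    integral_Ioi_rpow_of_lt hp hc]

lemma lintegral_Ioo_const_sub_rpow_neg {b c κ : ℝ} (hcb : c ≤ b) (hκ : κ < 1) :
    ∫⁻ r in Ioo c b, ofReal ((b - r) ^ (-κ)) = ofReal ((b - c) ^ (1 - κ) / (1 - κ)) := by
  rw [setLIntegral_comp_const_sub (fun u => ofReal (u ^ (-κ))), image_const_sub_Ioo, sub_self,
    lintegral_Ioo_zero_rpow (sub_nonneg.2 hcb) (by linarith), neg_add_eq_sub]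

lemma lintegral_Iic_const_sub_rpow_neg {b c κ : ℝ} (hcb : c < b) (hκ : 1 < κ) :
    ∫⁻ r in Iic c, ofReal ((b - r) ^ (-κ)) = ofReal ((b - c) ^ (1 - κ) / (κ - 1)) := by
  rw [setLIntegral_comp_const_sub (fun u => ofReal (u ^ (-κ))), image_const_sub_Iic,
    setLIntegral_congr Ioi_ae_eq_Ici.symm, lintegral_Ioi_rpow_of_lt (sub_pos.2 hcb) (by linarith),
    neg_add_eq_sub, neg_div, ← div_neg, neg_sub]

lemma rpow_neg_mul_rpow_neg_le {x y a b : ℝ} (hx : 0 < x) (hxy : x ≤ y) (hb : 0 ≤ b) :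
    x ^ (-a) * y ^ (-b) ≤ x ^ (-(a + b)) := by
  rw [neg_add, Real.rpow_add hx]
  exact mul_le_mul_of_nonneg_left (Real.rpow_le_rpow_of_nonpos hx hxy (neg_nonpos.2 hb))
    (Real.rpow_nonneg hx.le _)

section ThreeFactors

variable {r₁ r₂ r₃ κ₁ κ₂ κ₃ : ℝ}

lemma three_rpow_neg_le_of_lt {r : ℝ} (hr : r < r₁) (h₁₂ : r₁ ≤ r₂) (h₁₃ : r₁ ≤ r₃)
    (hκ₂ : 0 ≤ κ₂) (hκ₃ : 0 ≤ κ₃) :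
    (r₁ - r) ^ (-κ₁) * (r₂ - r) ^ (-κ₂) * (r₃ - r) ^ (-κ₃) ≤ (r₁ - r) ^ (-(κ₁ + κ₂ + κ₃)) :=
  (mul_le_mul_of_nonneg_right (rpow_neg_mul_rpow_neg_le (sub_pos.2 hr) (by linarith) hκ₂)
      (Real.rpow_nonneg (by linarith) _)).trans
    (rpow_neg_mul_rpow_neg_le (sub_pos.2 hr) (by linarith) hκ₃)

lemma three_rpow_neg_le_mul_of_lt {r : ℝ} (hr : r < r₁) (h₁₂ : r₁ ≤ r₂) (h₁₃ : r₁ < r₃)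
    (hκ₂ : 0 ≤ κ₂) (hκ₃ : 0 ≤ κ₃) :
    (r₁ - r) ^ (-κ₁) * (r₂ - r) ^ (-κ₂) * (r₃ - r) ^ (-κ₃) ≤
      (r₃ - r₁) ^ (-κ₃) * (r₁ - r) ^ (-(κ₁ + κ₂)) :=
  calc (r₁ - r) ^ (-κ₁) * (r₂ - r) ^ (-κ₂) * (r₃ - r) ^ (-κ₃)
      ≤ (r₁ - r) ^ (-(κ₁ + κ₂)) * (r₃ - r₁) ^ (-κ₃) :=
        mul_le_mul (rpow_neg_mul_rpow_neg_le (sub_pos.2 hr) (by linarith) hκ₂)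
          (Real.rpow_le_rpow_of_nonpos (sub_pos.2 h₁₃) (by linarith) (by linarith))
          (Real.rpow_nonneg (by linarith) _) (Real.rpow_nonneg (by linarith) _)
    _ = (r₃ - r₁) ^ (-κ₃) * (r₁ - r) ^ (-(κ₁ + κ₂)) := mul_comm _ _

lemma setLIntegral_Iic_three_rpow_neg_le {c : ℝ} (hc : c < r₁) (h₁₂ : r₁ ≤ r₂) (h₁₃ : r₁ ≤ r₃)
    (hκ₂ : 0 ≤ κ₂) (hκ₃ : 0 ≤ κ₃) (hκ : 1 < κ₁ + κ₂ + κ₃) :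
    ∫⁻ r in Iic c, ofReal ((r₁ - r) ^ (-κ₁) * (r₂ - r) ^ (-κ₂) * (r₃ - r) ^ (-κ₃)) ≤
      ofReal ((r₁ - c) ^ (1 - κ₁ - κ₂ - κ₃) / (κ₁ + κ₂ + κ₃ - 1)) := by
  refine (setLIntegral_mono' measurableSet_Iic fun r hr => ENNReal.ofReal_le_ofReal
    (three_rpow_neg_le_of_lt (hc.trans_le' hr) h₁₂ h₁₃ hκ₂ hκ₃)).trans_eq ?_
  rw [lintegral_Iic_const_sub_rpow_neg hc hκ, ← sub_sub, ← sub_sub]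

lemma setLIntegral_Ioo_three_rpow_neg_le {c : ℝ} (hc : c ≤ r₁) (h₁₂ : r₁ ≤ r₂) (h₁₃ : r₁ < r₃)
    (hκ₂ : 0 ≤ κ₂) (hκ₃ : 0 ≤ κ₃) (hκ : κ₁ + κ₂ < 1) :
    ∫⁻ r in Ioo c r₁, ofReal ((r₁ - r) ^ (-κ₁) * (r₂ - r) ^ (-κ₂) * (r₃ - r) ^ (-κ₃)) ≤
      ofReal ((r₃ - r₁) ^ (-κ₃) * ((r₁ - c) ^ (1 - κ₁ - κ₂) / (1 - κ₁ - κ₂))) := by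
  have hconst := Real.rpow_nonneg (sub_pos.2 h₁₃).le (-κ₃)
  refine (setLIntegral_mono' measurableSet_Ioo fun r hr =>
    (ENNReal.ofReal_le_ofReal (three_rpow_neg_le_mul_of_lt hr.2 h₁₂ h₁₃ hκ₂ hκ₃)).trans_eq
      (ENNReal.ofReal_mul hconst)).trans_eq ?_
  rw [lintegral_const_mul' _ _ ENNReal.ofReal_ne_top, lintegral_Ioo_const_sub_rpow_neg hc hκ,
    ← ENNReal.ofReal_mul hconst, ← sub_sub]

end ThreeFactors

theorem stmt_1_general (r₁ r₂ r₃ κ₁ κ₂ κ₃ : ℝ) (hr₁₂ : r₁ < r₂) (hr₂₃ : r₂ ≤ r₃)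
    (hκ₂ : 0 < κ₂) (hκ₃ : 0 < κ₃)
    (hκ12 : κ₁ + κ₂ < 1) (hκsum : 1 < κ₁ + κ₂ + κ₃) :
    ∫⁻ r in Set.Ioo (0 : ℝ) r₁,
        ENNReal.ofReal ((r₁ - r) ^ (-κ₁) * (r₂ - r) ^ (-κ₂) * (r₃ - r) ^ (-κ₃)) ≤
      ENNReal.ofReal
        ((1 / (1 - κ₁ - κ₂) + 1 / (κ₁ + κ₂ + κ₃ - 1)) *
          (r₃ - r₁) ^ (1 - κ₁ - κ₂ - κ₃)) := by
  set f := fun r => ofReal ((r₁ - r) ^ (-κ₁) * (r₂ - r) ^ (-κ₂) * (r₃ - r) ^ (-κ₃))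
  have h₁₃ : r₁ < r₃ := hr₁₂.trans_le hr₂₃
  set δ := r₃ - r₁
  have hδ : 0 < δ := sub_pos.2 h₁₃
  calc ∫⁻ r in Ioo 0 r₁, f r
      ≤ ∫⁻ r in Iic (r₁ - δ) ∪ Ioo (r₁ - δ) r₁, f r :=
        lintegral_mono_set (Ioo_subset_Iio_self.trans Iio_subset_Iic_union_Ioo)
    _ ≤ (∫⁻ r in Iic (r₁ - δ), f r) + ∫⁻ r in Ioo (r₁ - δ) r₁, f r := lintegral_union_le _ _ _
    _ ≤ ofReal (δ ^ (1 - κ₁ - κ₂ - κ₃) / (κ₁ + κ₂ + κ₃ - 1)) +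
          ofReal (δ ^ (-κ₃) * (δ ^ (1 - κ₁ - κ₂) / (1 - κ₁ - κ₂))) := by
      simpa only [sub_sub_cancel] using add_le_add
        (setLIntegral_Iic_three_rpow_neg_le (sub_lt_self r₁ hδ) hr₁₂.le h₁₃.le hκ₂.le
          hκ₃.le hκsum)
        (setLIntegral_Ioo_three_rpow_neg_le (sub_le_self r₁ hδ.le) hr₁₂.le h₁₃
          hκ₂.le hκ₃.le hκ12)
    _ = ofReal ((1 / (1 - κ₁ - κ₂) + 1 / (κ₁ + κ₂ + κ₃ - 1)) * δ ^ (1 - κ₁ - κ₂ - κ₃)) := by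
      rw [← ENNReal.ofReal_add (div_nonneg (Real.rpow_nonneg hδ.le _) (by linarith))
          (mul_nonneg (Real.rpow_nonneg hδ.le _)
            (div_nonneg (Real.rpow_nonneg hδ.le _) (by linarith))),
        mul_div_assoc', ← Real.rpow_add hδ]
      ring_nf

/-- Lemma 6.5 (Lemma `lm2`): for `0 < r₁ < r₂ ≤ r₃` and positive exponents with
`κ₁ + κ₂ < 1` and `κ₁ + κ₂ + κ₃ > 1`,
`∫₀^{r₁} (r₁ - r)^{-κ₁} (r₂ - r)^{-κ₂} (r₃ - r)^{-κ₃} dr ≤ C (r₃ - r₁)^{1 - κ₁ - κ₂ - κ₃}`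
with `C = 1/(1 - κ₁ - κ₂) + 1/(κ₁ + κ₂ + κ₃ - 1)`. -/
theorem stmt_1 (r₁ r₂ r₃ κ₁ κ₂ κ₃ : ℝ) (hr₁ : 0 < r₁) (hr₁₂ : r₁ < r₂) (hr₂₃ : r₂ ≤ r₃)
    (hκ₁ : 0 < κ₁) (hκ₂ : 0 < κ₂) (hκ₃ : 0 < κ₃)
    (hκ12 : κ₁ + κ₂ < 1) (hκsum : 1 < κ₁ + κ₂ + κ₃) :
    ∫⁻ r in Set.Ioo (0 : ℝ) r₁,
        ENNReal.ofReal ((r₁ - r) ^ (-κ₁) * (r₂ - r) ^ (-κ₂) * (r₃ - r) ^ (-κ₃)) ≤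
      ENNReal.ofReal
        ((1 / (1 - κ₁ - κ₂) + 1 / (κ₁ + κ₂ + κ₃ - 1)) *
          (r₃ - r₁) ^ (1 - κ₁ - κ₂ - κ₃)) :=
  stmt_1_general r₁ r₂ r₃ κ₁ κ₂ κ₃ hr₁₂ hr₂₃ hκ₂ hκ₃ hκ12 hκsum
end

section
/- Let x ∈ ℝ² and 0 < r < |x|, and let κ > 0. Then the arc-length integral of |y|^{−κ} over the circle {y : |y − x| = r}, i.e. r ∫₀^{2π} |x + r(cos θ, sin θ)|^{−κ} dθ, satisfies: if κ > 1 it is at most C(κ) · min{ (|x| − r)^{1−κ}, r (|x| − r)^{−κ} }, and if 0 < κ < 1 it is at most C(κ) · min{ |x|^{1−κ}, r (|x| − r)^{−κ} }, where C(κ) is a constant depending only on κ. -/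
/-!
Write `M = ‖x‖`. A rotation turns `‖x + r (cos θ, sin θ)‖` into the distance from `M` to the point
`r e^{it}`, `t = θ - arg x - π`, whose square is `(M - r)² + 4 M r sin² (t / 2)`. This distance is
at least `M - r`, and by Jordan's inequality at least `(2 / π) √(M r) |t|` for `|t| ≤ π`. Bounding
the integrand by the first quantity alone gives `r (M - r)^{-κ}`; by the second alone, when
`κ < 1`, it gives `M^{1-κ}` since `r ≤ √(M r) ≤ M`; by their minimum, when `κ > 1`, splitting
`[0, π]` where the two cross, it gives `(M - r)^{1-κ}`.
-/

open MeasureTheory Set Real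

theorem integral_rpow_neg_le_of_one_lt {a b κ : ℝ} (hb : 0 < b) (hba : b ≤ a) (hκ : 1 < κ) :
    ∫ t in b..a, t ^ (-κ) ≤ b ^ (1 - κ) / (κ - 1) := by
  have h0 : (0 : ℝ) ∉ uIcc b a := notMem_uIcc_of_lt hb (hb.trans_le hba)
  rw [integral_rpow (Or.inr ⟨by linarith, h0⟩), show -κ + 1 = -(κ - 1) by ring, div_neg,
    ← neg_div, neg_sub, show -(κ - 1) = 1 - κ by ring]
  gcongr
  exact sub_le_self _ (rpow_nonneg (hb.le.trans hba) _)

theorem intervalIntegral_le_of_le_min_rpow_of_one_lt {g : ℝ → ℝ} {a c d κ : ℝ} (ha : 0 ≤ a)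
    (hc : 0 < c) (hd : 0 < d) (hκ : 1 < κ) (hg : IntervalIntegrable g volume 0 a)
    (hgd : ∀ t ∈ Ioo 0 a, g t ≤ d ^ (-κ)) (hgc : ∀ t ∈ Ioo 0 a, g t ≤ (c * t) ^ (-κ)) :
    ∫ t in 0..a, g t ≤ κ / (κ - 1) * (d ^ (1 - κ) / c) := by
  have hhead_eq : d / c * d ^ (-κ) = d ^ (1 - κ) / c := by
    rw [sub_eq_add_neg, rpow_add hd, rpow_one]; ring
  have hκ' : 1 ≤ κ / (κ - 1) := by rw [le_div_iff₀ (by linarith)]; linarith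
  have hhead : ∀ b, 0 ≤ b → b ≤ a → ∫ t in 0..b, g t ≤ b * d ^ (-κ) := fun b hb hba => by
    simpa using intervalIntegral.integral_mono_on_of_le_Ioo hb (hg.mono_set (by
      rw [uIcc_of_le hb, uIcc_of_le ha]; exact Icc_subset_Icc_right hba)) intervalIntegrable_const
      (fun t ht => hgd t ⟨ht.1, ht.2.trans_le hba⟩)
  rcases le_or_gt a (d / c) with hac | hca
  · calc ∫ t in 0..a, g t ≤ a * d ^ (-κ) := hhead a ha le_rfl
      _ ≤ d / c * d ^ (-κ) := by gcongr
      _ ≤ κ / (κ - 1) * (d ^ (1 - κ) / c) := by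
        rw [hhead_eq]; exact le_mul_of_one_le_left (by positivity) hκ'
  have hdc : 0 < d / c := div_pos hd hc
  have hg₁ : IntervalIntegrable g volume 0 (d / c) :=
    hg.mono_set (by rw [uIcc_of_le hdc.le, uIcc_of_le ha]; exact Icc_subset_Icc_right hca.le)
  have hg₂ : IntervalIntegrable g volume (d / c) a :=
    hg.mono_set (by rw [uIcc_of_le hca.le, uIcc_of_le ha]; exact Icc_subset_Icc_left hdc.le)
  have htail : ∫ t in d / c..a, g t ≤ c ^ (-κ) * ∫ t in d / c..a, t ^ (-κ) := by
    rw [← intervalIntegral.integral_const_mul]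
    refine intervalIntegral.integral_mono_on_of_le_Ioo hca.le hg₂
      ((intervalIntegral.intervalIntegrable_rpow
        (Or.inr (notMem_uIcc_of_lt hdc (hdc.trans hca)))).const_mul _) fun t ht => ?_
    have ht0 : 0 < t := hdc.trans ht.1
    rw [← mul_rpow hc.le ht0.le]
    exact hgc t ⟨ht0, ht.2⟩
  have htail' : c ^ (-κ) * (d / c) ^ (1 - κ) = d ^ (1 - κ) / c := by
    rw [div_rpow hd.le hc.le, mul_div_left_comm, ← rpow_sub hc, show -κ - (1 - κ) = -1 by ring,
      rpow_neg_one, div_eq_mul_inv]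
  calc ∫ t in 0..a, g t = (∫ t in 0..d / c, g t) + ∫ t in d / c..a, g t :=
        (intervalIntegral.integral_add_adjacent_intervals hg₁ hg₂).symm
    _ ≤ d / c * d ^ (-κ) + c ^ (-κ) * ((d / c) ^ (1 - κ) / (κ - 1)) := by
        gcongr
        · exact hhead _ hdc.le hca.le
        · exact htail.trans (by gcongr; exact integral_rpow_neg_le_of_one_lt hdc hca.le hκ)
    _ = κ / (κ - 1) * (d ^ (1 - κ) / c) := by
        have hκ₁ : κ - 1 ≠ 0 := by linarith
        rw [hhead_eq, ← mul_div_assoc, htail']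
        field_simp
        ring

theorem intervalIntegral_le_of_le_rpow_of_lt_one {g : ℝ → ℝ} {a c κ : ℝ} (ha : 0 ≤ a)
    (hc : 0 < c) (hκ : κ < 1) (hg : IntervalIntegrable g volume 0 a)
    (hgc : ∀ t ∈ Ioo 0 a, g t ≤ (c * t) ^ (-κ)) :
    ∫ t in 0..a, g t ≤ c ^ (-κ) * (a ^ (1 - κ) / (1 - κ)) := by
  calc ∫ t in 0..a, g t ≤ ∫ t in 0..a, c ^ (-κ) * t ^ (-κ) := by
        refine intervalIntegral.integral_mono_on_of_le_Ioo ha hg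
          ((intervalIntegral.intervalIntegrable_rpow' (by linarith)).const_mul _) fun t ht => ?_
        rw [← mul_rpow hc.le ht.1.le]
        exact hgc t ht
    _ = c ^ (-κ) * (a ^ (1 - κ) / (1 - κ)) := by
        rw [intervalIntegral.integral_const_mul, integral_rpow (Or.inl (by linarith)),
          zero_rpow (by linarith), show -κ + 1 = 1 - κ by ring, sub_zero]

theorem dist_circleMap_sq (M r t : ℝ) :
    dist (M : ℂ) (circleMap 0 r t) ^ 2 = (M - r) ^ 2 + 4 * M * r * sin (t / 2) ^ 2 := by
  rw [dist_eq_norm, ← Complex.normSq_eq_norm_sq, Complex.normSq_apply]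
  simp only [circleMap_zero, Complex.sub_re, Complex.sub_im, Complex.ofReal_re, Complex.ofReal_im,
    Complex.mul_re, Complex.mul_im, Complex.exp_ofReal_mul_I_re, Complex.exp_ofReal_mul_I_im]
  rw [sin_sq_eq_half_sub, show 2 * (t / 2) = t by ring]
  linear_combination r ^ 2 * sin_sq_add_cos_sq t

theorem dist_circleMap_neg (M r t : ℝ) :
    dist (M : ℂ) (circleMap 0 r (-t)) = dist (M : ℂ) (circleMap 0 r t) := by
  rw [← sq_eq_sq₀ dist_nonneg dist_nonneg, dist_circleMap_sq, dist_circleMap_sq, neg_div, sin_neg,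
    neg_sq]

theorem sub_le_dist_circleMap {r : ℝ} (M t : ℝ) (hr : 0 ≤ r) :
    M - r ≤ dist (M : ℂ) (circleMap 0 r t) := by
  calc M - r ≤ ‖(M : ℂ)‖ - ‖circleMap 0 r t‖ := by
        rw [norm_circleMap_zero, abs_of_nonneg hr, Complex.norm_real, Real.norm_eq_abs]
        gcongr; exact le_abs_self M
    _ ≤ dist (M : ℂ) (circleMap 0 r t) := by rw [dist_eq_norm]; exact norm_sub_norm_le _ _

theorem mul_le_dist_circleMap {M r t : ℝ} (hM : 0 ≤ M) (hr : 0 ≤ r) (ht₀ : 0 ≤ t) (htπ : t ≤ π) :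
    2 * √(M * r) / π * t ≤ dist (M : ℂ) (circleMap 0 r t) := by
  have hjordan : 2 / π * (t / 2) ≤ sin (t / 2) := mul_le_sin (by linarith) (by linarith)
  rw [← sq_le_sq₀ (by positivity) dist_nonneg, dist_circleMap_sq]
  calc (2 * √(M * r) / π * t) ^ 2 = 4 * M * r * (2 / π * (t / 2)) ^ 2 := by
        rw [div_mul_eq_mul_div, div_pow, mul_pow, mul_pow, sq_sqrt (by positivity)]; ring
    _ ≤ (M - r) ^ 2 + 4 * M * r * sin (t / 2) ^ 2 := by
        have := pow_le_pow_left₀ (by positivity) hjordan 2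
        nlinarith [sq_nonneg (M - r), mul_nonneg hM hr]

theorem Function.Periodic.intervalIntegral_comp_sub_of_even {E : Type*} [NormedAddCommGroup E]
    [NormedSpace ℝ E] {h : ℝ → E} {T : ℝ}
    (hper : Function.Periodic h T) (hcont : Continuous h) (heven : ∀ t, h (-t) = h t) (s : ℝ) :
    ∫ θ in 0..T, h (θ - s) = (2 : ℝ) • ∫ t in 0..T / 2, h t := by
  have hshift : ∫ t in -s..-s + T, h t = ∫ t in -(T / 2)..-(T / 2) + T, h t :=
    hper.intervalIntegral_add_eq _ _
  have hleft : ∫ t in -(T / 2)..0, h t = ∫ t in 0..T / 2, h t := by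
    simpa only [heven, neg_zero] using
      (intervalIntegral.integral_comp_neg (a := 0) (b := T / 2) h).symm
  rw [intervalIntegral.integral_comp_sub_right, zero_sub, sub_eq_neg_add, hshift,
    show -(T / 2) + T = T / 2 by ring,
    ← intervalIntegral.integral_add_adjacent_intervals (b := 0) (hcont.intervalIntegrable _ _)
      (hcont.intervalIntegrable _ _), hleft, two_smul]

open Complex in
theorem norm_add_mul_exp_eq_dist_circleMap (z : ℂ) (r θ : ℝ) :
    ‖z + r * exp (θ * I)‖ = dist (‖z‖ : ℂ) (circleMap 0 r (θ - (arg z + π))) := by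
  rw [dist_eq_norm, circleMap_zero,
    show ((θ - (arg z + π) : ℝ) : ℂ) * I = θ * I - arg z * I - π * I by push_cast; ring,
    Complex.exp_sub, Complex.exp_sub, exp_pi_mul_I]
  conv_lhs => rw [← norm_mul_exp_arg_mul_I z]
  rw [show (‖z‖ : ℂ) - r * (exp (θ * I) / exp (arg z * I) / -1)
      = (‖z‖ * exp (arg z * I) + r * exp (θ * I)) / exp (arg z * I) by field_simp; ring,
    norm_div, norm_exp_ofReal_mul_I, div_one]

open Complex in
theorem norm_add_smul_eq_norm_add_mul_exp (x : EuclideanSpace ℝ (Fin 2)) (r θ : ℝ) :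
    ‖x + r • (WithLp.equiv 2 (Fin 2 → ℝ)).symm ![Real.cos θ, Real.sin θ]‖ =
      ‖orthonormalBasisOneI.repr.symm x + r * exp (θ * I)‖ := by
  rw [← orthonormalBasisOneI.repr.symm.norm_map]
  congr 1
  apply Complex.ext <;>
    simp [exp_ofReal_mul_I_re, exp_ofReal_mul_I_im, cos_ofReal_re, sin_ofReal_re]

open Complex in
theorem exists_norm_add_smul_eq_dist_circleMap (x : EuclideanSpace ℝ (Fin 2)) (r : ℝ) :
    ∃ s, ∀ θ, ‖x + r • (WithLp.equiv 2 (Fin 2 → ℝ)).symm ![Real.cos θ, Real.sin θ]‖ =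
      dist (‖x‖ : ℂ) (circleMap 0 r (θ - s)) := by
  refine ⟨arg (orthonormalBasisOneI.repr.symm x) + π, fun θ => ?_⟩
  rw [norm_add_smul_eq_norm_add_mul_exp, norm_add_mul_exp_eq_dist_circleMap,
    LinearIsometryEquiv.norm_map]

section

variable {M r κ : ℝ}

theorem continuous_dist_circleMap_rpow (hr : 0 ≤ r) (hrM : r < M) :
    Continuous fun t => dist (M : ℂ) (circleMap 0 r t) ^ (-κ) :=
  (continuous_const.dist (continuous_circleMap 0 r)).rpow_const fun t =>
    Or.inl (by linarith [sub_le_dist_circleMap M t hr])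

theorem integral_norm_add_smul_rpow_eq (x : EuclideanSpace ℝ (Fin 2)) (hr : 0 ≤ r)
    (hrx : r < ‖x‖) :
    ∫ θ in (0 : ℝ)..(2 * π),
        ‖x + r • (WithLp.equiv 2 (Fin 2 → ℝ)).symm ![Real.cos θ, Real.sin θ]‖ ^ (-κ) =
      2 * ∫ t in (0 : ℝ)..π, dist (‖x‖ : ℂ) (circleMap 0 r t) ^ (-κ) := by
  obtain ⟨s, hs⟩ := exists_norm_add_smul_eq_dist_circleMap x r
  simp_rw [hs]
  have hper : Function.Periodic (fun t => dist (‖x‖ : ℂ) (circleMap 0 r t) ^ (-κ)) (2 * π) :=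
    fun t => by simp only [periodic_circleMap 0 r t]
  rw [hper.intervalIntegral_comp_sub_of_even (continuous_dist_circleMap_rpow hr hrx)
    (fun t => by simp only [dist_circleMap_neg]) s, smul_eq_mul, mul_div_cancel_left₀ _ two_ne_zero]

theorem integral_dist_circleMap_rpow_le (hr : 0 ≤ r) (hrM : r < M) (hκ : 0 ≤ κ) :
    ∫ t in (0 : ℝ)..π, dist (M : ℂ) (circleMap 0 r t) ^ (-κ) ≤ π * (M - r) ^ (-κ) := by
  simpa using intervalIntegral.integral_mono_on pi_pos.le
    ((continuous_dist_circleMap_rpow hr hrM).intervalIntegrable _ _)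
    (intervalIntegrable_const (μ := volume)) fun t _ =>
      rpow_le_rpow_of_nonpos (sub_pos.2 hrM) (sub_le_dist_circleMap M t hr) (by linarith)

theorem integral_dist_circleMap_rpow_le_of_one_lt (hr : 0 < r) (hrM : r < M) (hκ : 1 < κ) :
    ∫ t in (0 : ℝ)..π, dist (M : ℂ) (circleMap 0 r t) ^ (-κ) ≤
      κ / (κ - 1) * ((M - r) ^ (1 - κ) / (2 * √(M * r) / π)) := by
  have hMr : 0 < √(M * r) := sqrt_pos.2 (mul_pos (hr.trans hrM) hr)
  refine intervalIntegral_le_of_le_min_rpow_of_one_lt pi_pos.le (by positivity) (sub_pos.2 hrM) hκ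
    ((continuous_dist_circleMap_rpow hr.le hrM).intervalIntegrable _ _)
    (fun t _ => rpow_le_rpow_of_nonpos (sub_pos.2 hrM) (sub_le_dist_circleMap M t hr.le)
      (by linarith))
    fun t ht => rpow_le_rpow_of_nonpos (by have := ht.1; positivity)
      (mul_le_dist_circleMap (hr.trans hrM).le hr.le ht.1.le ht.2.le) (by linarith)

theorem integral_dist_circleMap_rpow_le_of_lt_one (hr : 0 < r) (hrM : r < M) (hκ₀ : 0 ≤ κ)
    (hκ : κ < 1) :
    ∫ t in (0 : ℝ)..π, dist (M : ℂ) (circleMap 0 r t) ^ (-κ) ≤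
      (2 * √(M * r) / π) ^ (-κ) * (π ^ (1 - κ) / (1 - κ)) := by
  have hMr : 0 < √(M * r) := sqrt_pos.2 (mul_pos (hr.trans hrM) hr)
  exact intervalIntegral_le_of_le_rpow_of_lt_one pi_pos.le (by positivity) hκ
    ((continuous_dist_circleMap_rpow hr.le hrM).intervalIntegrable _ _)
    fun t ht => rpow_le_rpow_of_nonpos (by have := ht.1; positivity)
      (mul_le_dist_circleMap (hr.trans hrM).le hr.le ht.1.le ht.2.le) (by linarith)

theorem le_sqrt_mul_of_le (hr : 0 ≤ r) (hrM : r ≤ M) : r ≤ √(M * r) :=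
  le_sqrt_of_sq_le (by nlinarith)

theorem mul_integral_dist_circleMap_rpow_le_of_one_lt (hr : 0 < r) (hrM : r < M) (hκ : 1 < κ) :
    r * (2 * ∫ t in (0 : ℝ)..π, dist (M : ℂ) (circleMap 0 r t) ^ (-κ)) ≤
      π * κ / (κ - 1) * (M - r) ^ (1 - κ) := by
  have hMr : 0 < √(M * r) := sqrt_pos.2 (mul_pos (hr.trans hrM) hr)
  calc r * (2 * ∫ t in (0 : ℝ)..π, dist (M : ℂ) (circleMap 0 r t) ^ (-κ))
      ≤ r * (2 * (κ / (κ - 1) * ((M - r) ^ (1 - κ) / (2 * √(M * r) / π)))) := by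
        gcongr; exact integral_dist_circleMap_rpow_le_of_one_lt hr hrM hκ
    _ = r / √(M * r) * (π * κ / (κ - 1) * (M - r) ^ (1 - κ)) := by field_simp
    _ ≤ π * κ / (κ - 1) * (M - r) ^ (1 - κ) := by
        refine mul_le_of_le_one_left (by positivity) ?_
        exact (div_le_one hMr).2 (le_sqrt_mul_of_le hr.le hrM.le)

theorem mul_integral_dist_circleMap_rpow_le_of_lt_one (hr : 0 < r) (hrM : r < M) (hκ₀ : 0 ≤ κ)
    (hκ : κ < 1) :
    r * (2 * ∫ t in (0 : ℝ)..π, dist (M : ℂ) (circleMap 0 r t) ^ (-κ)) ≤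
      2 * π / (1 - κ) * M ^ (1 - κ) := by
  have hMr : 0 < √(M * r) := sqrt_pos.2 (mul_pos (hr.trans hrM) hr)
  have hκ₁ : 0 < 1 - κ := sub_pos.2 hκ
  have hpow : (2 * √(M * r) / π) ^ (-κ) * π ^ (1 - κ) = 2 ^ (-κ) * π * √(M * r) ^ (-κ) := by
    rw [div_rpow (by positivity) pi_pos.le, mul_rpow zero_le_two hMr.le, rpow_sub pi_pos, rpow_one,
      rpow_neg pi_pos.le]
    field_simp
  have hgeom : r * √(M * r) ^ (-κ) = r / √(M * r) * √(M * r) ^ (1 - κ) := by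
    rw [show -κ = 1 - κ - 1 by ring, rpow_sub_one hMr.ne']; ring
  calc r * (2 * ∫ t in (0 : ℝ)..π, dist (M : ℂ) (circleMap 0 r t) ^ (-κ))
      ≤ r * (2 * ((2 * √(M * r) / π) ^ (-κ) * (π ^ (1 - κ) / (1 - κ)))) := by
        gcongr; exact integral_dist_circleMap_rpow_le_of_lt_one hr hrM hκ₀ hκ
    _ = 2 ^ (-κ) * (2 * π / (1 - κ)) * (r / √(M * r) * √(M * r) ^ (1 - κ)) := by
        rw [← hgeom, ← mul_div_assoc, hpow]; ring
    _ ≤ 1 * (2 * π / (1 - κ)) * (1 * M ^ (1 - κ)) := by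
        gcongr
        · exact rpow_le_one_of_one_le_of_nonpos one_le_two (by linarith)
        · exact (div_le_one hMr).2 (le_sqrt_mul_of_le hr.le hrM.le)
        · exact sqrt_le_iff.2 ⟨by linarith, by nlinarith⟩
    _ = 2 * π / (1 - κ) * M ^ (1 - κ) := by ring

theorem mul_integral_dist_circleMap_rpow_le (hr : 0 < r) (hrM : r < M) (hκ : 0 ≤ κ) :
    r * (2 * ∫ t in (0 : ℝ)..π, dist (M : ℂ) (circleMap 0 r t) ^ (-κ)) ≤
      2 * π * (r * (M - r) ^ (-κ)) := by
  have := integral_dist_circleMap_rpow_le hr.le hrM hκ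
  calc _ ≤ r * (2 * (π * (M - r) ^ (-κ))) := by gcongr
    _ = _ := by ring

end

/-- Lemma 6.3 (Lemma `sphere`): estimate of the arc-length integral of `|y|^{-κ}` over the
circle `{y : |y - x| = r}` in `ℝ²`, for `0 < r < |x|`. The arc-length integral is realized
as `r ∫₀^{2π} |x + r (cos θ, sin θ)|^{-κ} dθ`. -/
theorem stmt_2 (κ : ℝ) (hκ : 0 < κ) :
    ∃ C : ℝ, 0 < C ∧
      ∀ (x : EuclideanSpace ℝ (Fin 2)) (r : ℝ), 0 < r → r < ‖x‖ →
        ((1 < κ →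
            r * ∫ θ in (0 : ℝ)..(2 * Real.pi),
                ‖x + r • (WithLp.equiv 2 (Fin 2 → ℝ)).symm ![Real.cos θ, Real.sin θ]‖ ^ (-κ) ≤
              C * min ((‖x‖ - r) ^ (1 - κ)) (r * (‖x‖ - r) ^ (-κ))) ∧
          (κ < 1 →
            r * ∫ θ in (0 : ℝ)..(2 * Real.pi),
                ‖x + r • (WithLp.equiv 2 (Fin 2 → ℝ)).symm ![Real.cos θ, Real.sin θ]‖ ^ (-κ) ≤
              C * min (‖x‖ ^ (1 - κ)) (r * (‖x‖ - r) ^ (-κ)))) := by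
  rcases lt_trichotomy κ 1 with hκ₁ | rfl | hκ₁
  · have hC : 2 * π ≤ 2 * π / (1 - κ) := le_div_self (by positivity) (by linarith) (by linarith)
    refine ⟨2 * π / (1 - κ), hC.trans_lt' (by positivity), fun x r hr hrx =>
      ⟨fun h => absurd h hκ₁.not_gt, fun _ => ?_⟩⟩
    rw [integral_norm_add_smul_rpow_eq x hr.le hrx, mul_min_of_nonneg _ _ (by positivity)]
    exact le_min (mul_integral_dist_circleMap_rpow_le_of_lt_one hr hrx hκ.le hκ₁)
      ((mul_integral_dist_circleMap_rpow_le hr hrx hκ.le).trans (by gcongr))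
  · exact ⟨1, one_pos, fun _ _ _ _ =>
      ⟨fun h => absurd h (lt_irrefl _), fun h => absurd h (lt_irrefl _)⟩⟩
  · have hκ₁' : 0 < κ - 1 := sub_pos.2 hκ₁
    have hC : 2 * π ≤ 2 * π * κ / (κ - 1) := by
      rw [le_div_iff₀ hκ₁']; nlinarith [pi_pos]
    refine ⟨2 * π * κ / (κ - 1), hC.trans_lt' (by positivity), fun x r hr hrx =>
      ⟨fun _ => ?_, fun h => absurd h hκ₁.not_gt⟩⟩
    rw [integral_norm_add_smul_rpow_eq x hr.le hrx, mul_min_of_nonneg _ _ (by positivity)]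
    refine le_min ((mul_integral_dist_circleMap_rpow_le_of_one_lt hr hrx hκ₁).trans ?_)
      ((mul_integral_dist_circleMap_rpow_le hr hrx hκ.le).trans (by gcongr))
    refine mul_le_mul_of_nonneg_right ?_ (rpow_nonneg (sub_pos.2 hrx).le _)
    gcongr
    linarith [pi_pos]
end

section
/- Let R, A > 0 and 0 < α < 1/2. Let u₀ : ℝ² → ℝ be measurable with |u₀(y)| ≤ A |y|^{−1/2−α} for all |y| > R. Then there is a constant C = C(α), depending only on α, such that for every t > 0 and every x ∈ ℝ² with |x| > R + t, (1/(2π t)) ∫_{B(x,t)} |u₀(y)| / √(t² − |y−x|²) dy ≤ C · A · |x|^{−1/2} (|x| − t)^{−α}. -/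
open MeasureTheory Set Metric
open scoped ENNReal

/-!
On `B(x, t)` we have `|y| > |x| - t`, so the hypothesis gives
`|u₀ y| ≤ A (|x| - t)^(-α) |y|^(-1/2)`, and it remains to bound the average of `|y|^(-1/2)`
against the kernel `(t² - |y - x|²)^(-1/2)` by `2√2 |x|^(-1/2)`.

Integrating the kernel along lines first gives `∫_{-a}^{a} (a² - u²)^(-1/2) du = π` (an arcsin),
so the kernel has total mass `2πt`, and more generally it turns a weight depending on one
coordinate into `π` times a one-dimensional integral over `(-t, t)`.
If `2t ≤ |x|`, then `|y| ≥ |x|/2` on the ball and the mass `2πt` is all we need.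
If `2t > |x|`, rotate so that `x` lies on a coordinate axis: `|y|` dominates the modulus of the
other coordinate `v`, and `π ∫_{-t}^{t} |v|^(-1/2) dv = 4π√t` gives an average `≤ 2 t^(-1/2)`.
-/

theorem lintegral_Ioo_eq_sub_of_hasDerivAt_of_nonneg {g g' : ℝ → ℝ} {a b : ℝ} (hab : a ≤ b)
    (hcont : ContinuousOn g (Icc a b)) (hderiv : ∀ x ∈ Ioo a b, HasDerivAt g (g' x) x)
    (hpos : ∀ x ∈ Ioo a b, 0 ≤ g' x) :
    ∫⁻ x in Ioo a b, ENNReal.ofReal (g' x) = ENNReal.ofReal (g b - g a) := by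
  have hint := intervalIntegral.integrableOn_deriv_of_nonneg hcont hderiv hpos
  rw [← ofReal_integral_eq_lintegral_ofReal (hint.mono_set Ioo_subset_Ioc_self)
    (ae_restrict_of_forall_mem measurableSet_Ioo hpos), ← integral_Ioc_eq_integral_Ioo,
    ← intervalIntegral.integral_of_le hab, intervalIntegral.integral_eq_sub_of_hasDerivAt_of_le
      hab hcont hderiv ((intervalIntegrable_iff_integrableOn_Ioc_of_le hab).2 hint)]

theorem lintegral_Ioo_one_div_sqrt_sq_sub_sq {a : ℝ} (ha : 0 < a) :
    ∫⁻ u in Ioo (-a) a, ENNReal.ofReal (1 / √(a ^ 2 - u ^ 2)) = ENNReal.ofReal Real.pi := by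
  have hderiv : ∀ u ∈ Ioo (-a) a,
      HasDerivAt (fun u => Real.arcsin (u / a)) (1 / √(a ^ 2 - u ^ 2)) u := by
    rintro u ⟨hlo, hhi⟩
    have hu : u / a ∈ Ioo (-1) 1 := by
      constructor
      · rw [lt_div_iff₀ ha]; linarith
      · rw [div_lt_iff₀ ha]; linarith
    refine ((Real.hasDerivAt_arcsin hu.1.ne' hu.2.ne).comp u
      ((hasDerivAt_id u).div_const a)).congr_deriv ?_
    have hsq : a ^ 2 - u ^ 2 = a ^ 2 * (1 - (u / a) ^ 2) := by field_simp
    rw [hsq, Real.sqrt_mul (by positivity), Real.sqrt_sq ha.le]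
    field_simp
  rw [lintegral_Ioo_eq_sub_of_hasDerivAt_of_nonneg (by linarith)
    (by fun_prop) hderiv (fun u _ => by positivity)]
  simp [neg_div, div_self ha.ne', Real.arcsin_neg]

-- Off `(-√c, √c)` the integrand is `1 / √(nonpositive) = 1 / 0 = 0`, hence the whole line.
theorem lintegral_one_div_sqrt_sub_sq {c : ℝ} (hc : 0 < c) :
    ∫⁻ u, ENNReal.ofReal (1 / √(c - u ^ 2)) = ENNReal.ofReal Real.pi := by
  set a := √c
  have ha : 0 < a := Real.sqrt_pos.2 hc
  have hca : c = a ^ 2 := (Real.sq_sqrt hc.le).symm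
  rw [← setLIntegral_eq_of_support_subset (s := Ioo (-a) a) fun u hu => ?_, hca,
    lintegral_Ioo_one_div_sqrt_sq_sub_sq ha]
  by_contra hmem
  have hau : a ≤ |u| := not_lt.1 fun h => hmem (abs_lt.1 h)
  have hneg : c - u ^ 2 ≤ 0 := by nlinarith [sq_abs u]
  simp [Real.sqrt_eq_zero_of_nonpos hneg] at hu

theorem lintegral_Ioo_abs_rpow_neg_half {t : ℝ} (ht : 0 < t) :
    ∫⁻ v in Ioo (-t) t, ENNReal.ofReal (|v| ^ (-(1 / 2) : ℝ)) =
      ENNReal.ofReal (4 * t ^ (1 / 2 : ℝ)) := by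
  have hcont : Continuous fun v : ℝ => 2 * v ^ (1 / 2 : ℝ) :=
    continuous_const.mul (Real.continuous_rpow_const (by norm_num))
  have hpos : ∫⁻ v in Ioo 0 t, ENNReal.ofReal (|v| ^ (-(1 / 2) : ℝ)) =
      ENNReal.ofReal (2 * t ^ (1 / 2 : ℝ)) := by
    rw [setLIntegral_congr_fun measurableSet_Ioo (fun v hv => by rw [abs_of_pos hv.1]),
      lintegral_Ioo_eq_sub_of_hasDerivAt_of_nonneg ht.le hcont.continuousOn
        (fun v hv => ((Real.hasDerivAt_rpow_const (Or.inl hv.1.ne')).const_mul 2).congr_deriv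
          (by norm_num; ring)) (fun v hv => Real.rpow_nonneg hv.1.le _)]
    simp
  have hneg : ∫⁻ v in Ioc (-t) 0, ENNReal.ofReal (|v| ^ (-(1 / 2) : ℝ)) =
      ENNReal.ofReal (2 * t ^ (1 / 2 : ℝ)) := by
    rw [← setLIntegral_congr Ioo_ae_eq_Ioc,
      setLIntegral_congr_fun measurableSet_Ioo (fun v hv => by rw [abs_of_neg hv.2]),
      lintegral_Ioo_eq_sub_of_hasDerivAt_of_nonneg (g := fun v => -(2 * (-v) ^ (1 / 2 : ℝ)))
        (by linarith) (hcont.comp continuous_neg).neg.continuousOn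
        (fun v hv => (((Real.hasDerivAt_rpow_const (Or.inl (neg_ne_zero.2 hv.2.ne))).comp v
          (hasDerivAt_neg v)).const_mul 2).neg.congr_deriv (by norm_num; ring))
        (fun v hv => Real.rpow_nonneg (neg_nonneg.2 hv.2.le) _)]
    simp
  rw [← Ioc_union_Ioo_eq_Ioo (by linarith) ht, lintegral_union measurableSet_Ioo
    (Set.disjoint_left.2 fun v h1 h2 => h1.2.not_gt h2.1), hpos, hneg,
    ← ENNReal.ofReal_add (by positivity) (by positivity)]
  ring_nf

-- The kernel `1 / √(t ^ 2 - ‖q‖ ^ 2)` vanishes off the disc of radius `t`.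
theorem lintegral_mul_one_div_sqrt_sq_sub_norm_sq {g : ℝ → ℝ≥0∞} (hg : Measurable g) {t : ℝ}
    (ht : 0 ≤ t) :
    ∫⁻ q : EuclideanSpace ℝ (Fin 2), g (q 0) * ENNReal.ofReal (1 / √(t ^ 2 - ‖q‖ ^ 2)) =
      ENNReal.ofReal Real.pi * ∫⁻ v in Ioo (-t) t, g v := by
  set H : ℝ × ℝ → ℝ≥0∞ := fun p => g p.1 * ENNReal.ofReal (1 / √(t ^ 2 - p.1 ^ 2 - p.2 ^ 2))
  have hH : Measurable H := by fun_prop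
  have hcoord : MeasurePreserving (fun q : EuclideanSpace ℝ (Fin 2) => (q 0, q 1)) :=
    (volume_preserving_finTwoArrow ℝ).comp (PiLp.volume_preserving_ofLp (Fin 2))
  have hinner : ∀ v, ∫⁻ u, H (v, u) =
      (Ioo (-t) t).indicator (fun v => ENNReal.ofReal Real.pi * g v) v := by
    intro v
    simp only [H]
    rw [lintegral_const_mul _ (by fun_prop)]
    by_cases hv : v ∈ Ioo (-t) t
    · have hc : 0 < t ^ 2 - v ^ 2 := by
        rw [sub_pos, sq_lt_sq, abs_of_nonneg ht]; exact abs_lt.2 hv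
      rw [lintegral_one_div_sqrt_sub_sq hc, indicator_of_mem hv, mul_comm]
    · have hc : t ^ 2 - v ^ 2 ≤ 0 := by
        rw [sub_nonpos, sq_le_sq, abs_of_nonneg ht]
        exact not_lt.1 fun h => hv (abs_lt.1 h)
      have hzero : ∀ u : ℝ, √(t ^ 2 - v ^ 2 - u ^ 2) = 0 := fun u =>
        Real.sqrt_eq_zero_of_nonpos (by nlinarith)
      simp [hzero, indicator_of_notMem hv]
  calc ∫⁻ q : EuclideanSpace ℝ (Fin 2), g (q 0) * ENNReal.ofReal (1 / √(t ^ 2 - ‖q‖ ^ 2))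
      = ∫⁻ q : EuclideanSpace ℝ (Fin 2), H (q 0, q 1) := by
        congr with q
        simp [H, EuclideanSpace.real_norm_sq_eq, Fin.sum_univ_two, sub_sub]
    _ = ∫⁻ v, ∫⁻ u, H (v, u) := by
        rw [hcoord.lintegral_comp hH, Measure.volume_eq_prod, lintegral_prod _ hH.aemeasurable]
    _ = ENNReal.ofReal Real.pi * ∫⁻ v in Ioo (-t) t, g v := by
        simp_rw [hinner]
        rw [lintegral_indicator measurableSet_Ioo, lintegral_const_mul _ hg]

theorem lintegral_one_div_sqrt_sq_sub_norm_sub_sq (x : EuclideanSpace ℝ (Fin 2)) {t : ℝ}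
    (ht : 0 ≤ t) :
    ∫⁻ y, ENNReal.ofReal (1 / √(t ^ 2 - ‖y - x‖ ^ 2)) = ENNReal.ofReal (2 * Real.pi * t) := by
  have h := lintegral_mul_one_div_sqrt_sq_sub_norm_sq (g := 1) measurable_const ht
  simp only [Pi.one_apply, one_mul, lintegral_const, Measure.restrict_apply MeasurableSet.univ,
    univ_inter, Real.volume_Ioo] at h
  rw [lintegral_sub_right_eq_self (fun y => ENNReal.ofReal (1 / √(t ^ 2 - ‖y‖ ^ 2))) x, h,
    ← ENNReal.ofReal_mul Real.pi_pos.le]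
  ring_nf

theorem exists_linearIsometryEquiv_apply_eq_norm_smul_single {ι : Type*} [Fintype ι]
    [DecidableEq ι] (x : EuclideanSpace ℝ ι) (i : ι) :
    ∃ L : EuclideanSpace ℝ ι ≃ₗᵢ[ℝ] EuclideanSpace ℝ ι, L x = ‖x‖ • EuclideanSpace.single i 1 :=
  ⟨Submodule.reflection (ℝ ∙ (x - ‖x‖ • EuclideanSpace.single i 1))ᗮ,
    Submodule.reflection_sub (by simp [norm_smul])⟩

theorem ae_apply_ne_zero {ι : Type*} [Fintype ι] (i : ι) :
    ∀ᵐ q : EuclideanSpace ℝ ι, q i ≠ 0 := by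
  classical
  have h := measure_eq_zero_iff_ae_notMem.1 (Measure.addHaar_submodule volume
    (LinearMap.ker (EuclideanSpace.proj i : EuclideanSpace ℝ ι →L[ℝ] ℝ).toLinearMap) fun h => ?_)
  · simpa using h
  · have := h ▸ Submodule.mem_top (x := EuclideanSpace.single i (1 : ℝ))
    simp at this

theorem lintegral_rpow_neg_half_div_sqrt_le (x : EuclideanSpace ℝ (Fin 2)) {t : ℝ} (ht : 0 < t) :
    ∫⁻ y, ENNReal.ofReal (‖y‖ ^ (-(1 / 2) : ℝ) / √(t ^ 2 - ‖y - x‖ ^ 2)) ≤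
      ENNReal.ofReal (4 * Real.pi * t ^ (1 / 2 : ℝ)) := by
  obtain ⟨L, hL⟩ := exists_linearIsometryEquiv_apply_eq_norm_smul_single x 1
  set F := fun y : EuclideanSpace ℝ (Fin 2) =>
    ENNReal.ofReal (‖y‖ ^ (-(1 / 2) : ℝ) / √(t ^ 2 - ‖y - x‖ ^ 2))
  have hbound : ∀ q : EuclideanSpace ℝ (Fin 2), q 0 ≠ 0 → F (L.symm q + x) ≤
      ENNReal.ofReal (|q 0| ^ (-(1 / 2) : ℝ)) * ENNReal.ofReal (1 / √(t ^ 2 - ‖q‖ ^ 2)) := by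
    intro q hq
    have hnorm : |q 0| ≤ ‖L.symm q + x‖ := by
      have : L (L.symm q + x) = q + L x := by simp
      rw [← L.norm_map, this, ← Real.norm_eq_abs]
      simpa [hL] using PiLp.norm_apply_le (q + L x) 0
    simp only [F, add_sub_cancel_right, LinearIsometryEquiv.norm_map]
    rw [div_eq_mul_one_div, ← ENNReal.ofReal_mul (by positivity)]
    exact ENNReal.ofReal_le_ofReal (mul_le_mul_of_nonneg_right
      (Real.rpow_le_rpow_of_nonpos (abs_pos.2 hq) hnorm (by norm_num)) (by positivity))
  calc ∫⁻ y, F y = ∫⁻ q, F (L.symm q + x) := by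
        rw [L.symm.measurePreserving.lintegral_comp_emb L.symm.toHomeomorph.measurableEmbedding
          (fun y => F (y + x)), lintegral_add_right_eq_self]
    _ ≤ ∫⁻ q : EuclideanSpace ℝ (Fin 2),
          ENNReal.ofReal (|q 0| ^ (-(1 / 2) : ℝ)) * ENNReal.ofReal (1 / √(t ^ 2 - ‖q‖ ^ 2)) :=
        lintegral_mono_ae ((ae_apply_ne_zero 0).mono hbound)
    _ = ENNReal.ofReal (4 * Real.pi * t ^ (1 / 2 : ℝ)) := by
        rw [lintegral_mul_one_div_sqrt_sq_sub_norm_sq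
          (g := fun v => ENNReal.ofReal (|v| ^ (-(1 / 2) : ℝ))) (by fun_prop) ht.le,
          lintegral_Ioo_abs_rpow_neg_half ht, ← ENNReal.ofReal_mul Real.pi_pos.le]
        ring_nf

theorem rpow_neg_half_le_sqrt_two_mul {r ρ : ℝ} (hρ : 0 < ρ) (h : ρ ≤ 2 * r) :
    r ^ (-(1 / 2) : ℝ) ≤ √2 * ρ ^ (-(1 / 2) : ℝ) :=
  calc r ^ (-(1 / 2) : ℝ) ≤ (ρ / 2) ^ (-(1 / 2) : ℝ) :=
        Real.rpow_le_rpow_of_nonpos (by positivity) (by linarith) (by norm_num)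
    _ = √2 * ρ ^ (-(1 / 2) : ℝ) := by
        rw [Real.div_rpow hρ.le zero_le_two, Real.rpow_neg zero_le_two, ← Real.sqrt_eq_rpow,
          div_inv_eq_mul, mul_comm]

theorem rpow_neg_half_sub_le_mul {r s α : ℝ} (hα : 0 ≤ α) (hs : 0 < s) (hsr : s ≤ r) :
    r ^ (-(1 / 2) - α) ≤ s ^ (-α) * r ^ (-(1 / 2) : ℝ) := by
  rw [sub_eq_add_neg, Real.rpow_add (hs.trans_le hsr), mul_comm]
  exact mul_le_mul_of_nonneg_right (Real.rpow_le_rpow_of_nonpos hs hsr (neg_nonpos.2 hα))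
    (Real.rpow_nonneg (hs.le.trans hsr) _)

theorem setLIntegral_ball_rpow_neg_half_div_sqrt_le (x : EuclideanSpace ℝ (Fin 2)) {t : ℝ}
    (ht : 0 < t) (hnear : 2 * t ≤ ‖x‖) :
    ∫⁻ y in ball x t, ENNReal.ofReal (‖y‖ ^ (-(1 / 2) : ℝ) / √(t ^ 2 - ‖y - x‖ ^ 2)) ≤
      ENNReal.ofReal (2 * Real.pi * t * (√2 * ‖x‖ ^ (-(1 / 2) : ℝ))) := by
  have hbound : ∀ y ∈ ball x t, ENNReal.ofReal (‖y‖ ^ (-(1 / 2) : ℝ) / √(t ^ 2 - ‖y - x‖ ^ 2)) ≤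
      ENNReal.ofReal (√2 * ‖x‖ ^ (-(1 / 2) : ℝ)) *
        ENNReal.ofReal (1 / √(t ^ 2 - ‖y - x‖ ^ 2)) := by
    intro y hy
    have hy := norm_lt_of_mem_ball (mem_ball_comm.1 hy)
    rw [← ENNReal.ofReal_mul (by positivity), ← mul_div_assoc, mul_one]
    exact ENNReal.ofReal_le_ofReal (div_le_div_of_nonneg_right
      (rpow_neg_half_le_sqrt_two_mul (by linarith) (by linarith)) (Real.sqrt_nonneg _))
  refine (setLIntegral_mono' measurableSet_ball hbound).trans
    ((setLIntegral_le_lintegral _ _).trans_eq ?_)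
  rw [lintegral_const_mul' _ _ ENNReal.ofReal_ne_top,
    lintegral_one_div_sqrt_sq_sub_norm_sub_sq x ht.le, ← ENNReal.ofReal_mul (by positivity),
    mul_comm]

theorem ofReal_mul_setLIntegral_ball_rpow_neg_half_le (x : EuclideanSpace ℝ (Fin 2)) {t : ℝ}
    (ht : 0 < t) (htx : t < ‖x‖) :
    ENNReal.ofReal (1 / (2 * Real.pi * t)) *
        ∫⁻ y in ball x t, ENNReal.ofReal (‖y‖ ^ (-(1 / 2) : ℝ) / √(t ^ 2 - ‖y - x‖ ^ 2)) ≤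
      ENNReal.ofReal (2 * √2 * ‖x‖ ^ (-(1 / 2) : ℝ)) := by
  have hx : 0 < ‖x‖ := ht.trans htx
  by_cases hnear : 2 * t ≤ ‖x‖
  · calc _ ≤ ENNReal.ofReal
            (1 / (2 * Real.pi * t) * (2 * Real.pi * t * (√2 * ‖x‖ ^ (-(1 / 2) : ℝ)))) := by
          rw [ENNReal.ofReal_mul (by positivity)]
          gcongr
          exact setLIntegral_ball_rpow_neg_half_div_sqrt_le x ht hnear
      _ ≤ ENNReal.ofReal (2 * √2 * ‖x‖ ^ (-(1 / 2) : ℝ)) := by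
          rw [one_div, inv_mul_cancel_left₀ (by positivity), mul_assoc]
          exact ENNReal.ofReal_le_ofReal (le_mul_of_one_le_left (by positivity) one_le_two)
  · calc _ ≤ ENNReal.ofReal (1 / (2 * Real.pi * t) * (4 * Real.pi * t ^ (1 / 2 : ℝ))) := by
          rw [ENNReal.ofReal_mul (by positivity)]
          gcongr
          exact (setLIntegral_le_lintegral _ _).trans (lintegral_rpow_neg_half_div_sqrt_le x ht)
      _ = ENNReal.ofReal (2 * t ^ (-(1 / 2) : ℝ)) := by
          rw [show (-(1 / 2) : ℝ) = 1 / 2 - 1 by norm_num, Real.rpow_sub_one ht.ne']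
          congr 1
          field_simp
          ring
      _ ≤ ENNReal.ofReal (2 * √2 * ‖x‖ ^ (-(1 / 2) : ℝ)) := by
          rw [mul_assoc]
          gcongr
          exact rpow_neg_half_le_sqrt_two_mul hx (by linarith)

theorem stmt_7_general (α : ℝ) (hα : 0 < α) :
    ∃ C : ℝ, 0 < C ∧
      ∀ (R A : ℝ), 0 < R → 0 < A →
      ∀ u₀ : EuclideanSpace ℝ (Fin 2) → ℝ, Measurable u₀ →
      (∀ y : EuclideanSpace ℝ (Fin 2), R < ‖y‖ → |u₀ y| ≤ A * ‖y‖ ^ (-(1 / 2) - α)) →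
      ∀ (t : ℝ) (x : EuclideanSpace ℝ (Fin 2)), 0 < t → R + t < ‖x‖ →
        ENNReal.ofReal (1 / (2 * Real.pi * t)) *
            ∫⁻ y in Metric.ball x t,
              ENNReal.ofReal (|u₀ y| / Real.sqrt (t ^ 2 - ‖y - x‖ ^ 2)) ≤
          ENNReal.ofReal (C * A * ‖x‖ ^ (-(1 / 2) : ℝ) * (‖x‖ - t) ^ (-α)) := by
  refine ⟨2 * √2, by positivity, fun R A hR hA u₀ _ hu₀ t x ht hx => ?_⟩
  have hs : 0 < ‖x‖ - t := by linarith
  have hbound : ∀ y ∈ ball x t, ENNReal.ofReal (|u₀ y| / √(t ^ 2 - ‖y - x‖ ^ 2)) ≤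
      ENNReal.ofReal (A * (‖x‖ - t) ^ (-α)) *
        ENNReal.ofReal (‖y‖ ^ (-(1 / 2) : ℝ) / √(t ^ 2 - ‖y - x‖ ^ 2)) := by
    intro y hy
    have hy : ‖x‖ - t < ‖y‖ := by linarith [norm_lt_of_mem_ball (mem_ball_comm.1 hy)]
    rw [← ENNReal.ofReal_mul (by positivity), ← mul_div_assoc, mul_assoc]
    refine ENNReal.ofReal_le_ofReal (div_le_div_of_nonneg_right
      ((hu₀ y (by linarith)).trans ?_) (Real.sqrt_nonneg _))
    exact mul_le_mul_of_nonneg_left (rpow_neg_half_sub_le_mul hα.le hs hy.le) hA.le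
  calc _ ≤ ENNReal.ofReal (A * (‖x‖ - t) ^ (-α)) * (ENNReal.ofReal (1 / (2 * Real.pi * t)) *
          ∫⁻ y in ball x t, ENNReal.ofReal (‖y‖ ^ (-(1 / 2) : ℝ) / √(t ^ 2 - ‖y - x‖ ^ 2))) := by
        rw [mul_left_comm, ← lintegral_const_mul' (ENNReal.ofReal (A * (‖x‖ - t) ^ (-α))) _
          ENNReal.ofReal_ne_top]
        exact mul_le_mul_right (setLIntegral_mono' measurableSet_ball hbound) _
    _ ≤ ENNReal.ofReal (A * (‖x‖ - t) ^ (-α)) *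
          ENNReal.ofReal (2 * √2 * ‖x‖ ^ (-(1 / 2) : ℝ)) := by
        gcongr
        exact ofReal_mul_setLIntegral_ball_rpow_neg_half_le x ht (by linarith)
    _ = ENNReal.ofReal (2 * √2 * A * ‖x‖ ^ (-(1 / 2) : ℝ) * (‖x‖ - t) ^ (-α)) := by
        rw [← ENNReal.ofReal_mul (by positivity)]
        ring_nf

/-- The estimate of the term `I₁` in the proof of Lemma `lm1`: for radial-type decaying data
`|u₀(y)| ≤ A |y|^{-1/2-α}` for `|y| > R`, the integral
`(1/(2πt)) ∫_{B(x,t)} |u₀(y)| / √(t² - |y-x|²) dy` is bounded by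
`C A |x|^{-1/2} (|x| - t)^{-α}` whenever `|x| > R + t`, with `C` depending only on `α`. -/
theorem stmt_7 (α : ℝ) (hα : 0 < α) (hα' : α < 1 / 2) :
    ∃ C : ℝ, 0 < C ∧
      ∀ (R A : ℝ), 0 < R → 0 < A →
      ∀ u₀ : EuclideanSpace ℝ (Fin 2) → ℝ, Measurable u₀ →
      (∀ y : EuclideanSpace ℝ (Fin 2), R < ‖y‖ → |u₀ y| ≤ A * ‖y‖ ^ (-(1 / 2) - α)) →
      ∀ (t : ℝ) (x : EuclideanSpace ℝ (Fin 2)), 0 < t → R + t < ‖x‖ →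
        ENNReal.ofReal (1 / (2 * Real.pi * t)) *
            ∫⁻ y in Metric.ball x t,
              ENNReal.ofReal (|u₀ y| / Real.sqrt (t ^ 2 - ‖y - x‖ ^ 2)) ≤
          ENNReal.ofReal (C * A * ‖x‖ ^ (-(1 / 2) : ℝ) * (‖x‖ - t) ^ (-α)) :=
  stmt_7_general α hα
end

section
/- Let R, B > 0 and 0 < β < 1/2. Let F : ℝ² × [0, ∞) → ℝ be measurable with |F(y,s)| ≤ B |y|^{−5/2} (|y| − s)^{−β} whenever s ≥ 0 and |y| > R + s. Then there is a constant C = C(β), depending only on β, such that for every t > 0 and every x ∈ ℝ² with |x| > R + t, (1/(2π)) ∫₀^{t} ∫_{B(x,t−s)} |F(y,s)| / √((t−s)² − |y−x|²) dy ds ≤ C · B · |x|^{−1/2} (|x| − t)^{−β}. -/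
/-!
Bound `|F(·, s)|` by its radial majorant and map `x` isometrically onto the positive real
axis of `ℂ`.
In polar coordinates `y = r e^{iθ}` one has `(t - s)² - |y - x|² = 2 |x| r (cos θ - c)`, and
`∫ dθ / √(cos θ - c) ≤ 4π` uniformly in `c ≥ 0` (Jordan's inequality applied to
`cos θ - cos w`), so the integral over the ball is at most
`4π B / √(2|x|) · ∫_{|x|-t+s}^∞ r^{-2} (r - s)^{-β} dr`.
After substituting `ρ = r - s` and integrating in `s` first (`∫₀^∞ (ρ + s)^{-2} ds = 1/ρ`),
what is left is `∫_{|x|-t}^∞ ρ^{-1-β} dρ = (|x| - t)^{-β} / β`.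
-/

open MeasureTheory Set Metric Real
open scoped ENNReal

lemma setLIntegral_Ioi_comp_add_right (f : ℝ → ℝ≥0∞) (a b : ℝ) :
    ∫⁻ x in Ioi a, f (x + b) = ∫⁻ x in Ioi (a + b), f x := by
  have := (measurePreserving_add_right volume b).setLIntegral_comp_preimage_emb
    (measurableEmbedding_addRight b) f (Ioi (a + b))
  rwa [preimage_add_const_Ioi, add_sub_cancel_right] at this

lemma lintegral_Ioi_rpow {p a : ℝ} (hp : p < -1) (ha : 0 < a) :
    ∫⁻ x in Ioi a, ENNReal.ofReal (x ^ p) = ENNReal.ofReal (-a ^ (p + 1) / (p + 1)) := by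
  rw [← ofReal_integral_eq_lintegral_ofReal (integrableOn_Ioi_rpow_of_lt hp ha),
    integral_Ioi_rpow_of_lt hp ha]
  filter_upwards [ae_restrict_mem measurableSet_Ioi] with x hx
  exact rpow_nonneg (ha.trans hx).le _

lemma lintegral_Ioo_zero_one_div_sqrt {L : ℝ} (hL : 0 ≤ L) :
    ∫⁻ x in Ioo 0 L, ENNReal.ofReal (1 / √x) = ENNReal.ofReal (2 * √L) := by
  have hint : IntegrableOn (fun x : ℝ => x ^ (-(1 / 2) : ℝ)) (Ioo 0 L) :=
    (intervalIntegrable_iff_integrableOn_Ioo_of_le hL).mp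
      (intervalIntegral.intervalIntegrable_rpow' (by norm_num))
  have hrpow : ∀ x ∈ Ioo (0 : ℝ) L, 1 / √x = x ^ (-(1 / 2) : ℝ) := fun x hx => by
    rw [rpow_neg hx.1.le, sqrt_eq_rpow, one_div]
  rw [setLIntegral_congr_fun measurableSet_Ioo fun x hx => congrArg ENNReal.ofReal (hrpow x hx),
    ← ofReal_integral_eq_lintegral_ofReal hint, ← integral_Ioc_eq_integral_Ioo,
    ← intervalIntegral.integral_of_le hL, integral_rpow (Or.inl (by norm_num)), sqrt_eq_rpow]
  · congr 1
    norm_num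
    ring
  · filter_upwards [ae_restrict_mem measurableSet_Ioo] with x hx
    exact rpow_nonneg hx.1.le _

lemma lintegral_Ioo_one_div_sqrt_const_sub {a b : ℝ} (hab : a ≤ b) :
    ∫⁻ x in Ioo a b, ENNReal.ofReal (1 / √(b - x)) = ENNReal.ofReal (2 * √(b - a)) := by
  have := (Measure.measurePreserving_sub_left volume b).setLIntegral_comp_preimage_emb
    (MeasurableEquiv.subLeft b).measurableEmbedding (fun x => ENNReal.ofReal (1 / √x))
    (Ioo 0 (b - a))
  rwa [preimage_const_sub_Ioo, sub_sub_cancel, sub_zero,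
    lintegral_Ioo_zero_one_div_sqrt (sub_nonneg.2 hab)] at this

lemma lintegral_Ioo_one_div_sqrt_sub_const {a b : ℝ} (hab : a ≤ b) :
    ∫⁻ x in Ioo a b, ENNReal.ofReal (1 / √(x - a)) = ENNReal.ofReal (2 * √(b - a)) := by
  have := (measurePreserving_sub_right volume a).setLIntegral_comp_preimage_emb
    (measurableEmbedding_subRight a) (fun x => ENNReal.ofReal (1 / √x)) (Ioo 0 (b - a))
  rwa [preimage_sub_const_Ioo, zero_add, sub_add_cancel,
    lintegral_Ioo_zero_one_div_sqrt (sub_nonneg.2 hab)] at this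

lemma two_div_pi_sq_mul_le_cos_sub_cos {w θ : ℝ} (hw : w ≤ π / 2) (hθ : θ ∈ Ioo (-w) w) :
    2 / π ^ 2 * ((w - θ) * (w + θ)) ≤ cos θ - cos w := by
  obtain ⟨h₁, h₂⟩ := hθ
  have hsin₁ := mul_le_sin (x := (w + θ) / 2) (by linarith) (by linarith)
  have hsin₂ := mul_le_sin (x := (w - θ) / 2) (by linarith) (by linarith)
  have hA : 0 ≤ 2 / π * ((w + θ) / 2) := mul_nonneg (by positivity) (by linarith)
  have hB : 0 ≤ 2 / π * ((w - θ) / 2) := mul_nonneg (by positivity) (by linarith)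
  calc 2 / π ^ 2 * ((w - θ) * (w + θ)) = 2 * (2 / π * ((w + θ) / 2)) * (2 / π * ((w - θ) / 2)) := by
        field_simp
    _ ≤ 2 * sin ((w + θ) / 2) * sin ((w - θ) / 2) :=
        mul_le_mul (by linarith) hsin₂ hB (by linarith)
    _ = cos θ - cos w := by
        rw [cos_sub_cos, show (θ - w) / 2 = -((w - θ) / 2) by ring, sin_neg, add_comm θ]
        ring

lemma one_div_sqrt_cos_sub_cos_le {w θ : ℝ} (hw : w ≤ π / 2) (hθ : θ ∈ Ioo (-w) w) :
    1 / √(cos θ - cos w) ≤ π / √(2 * w) * (1 / √(w - θ) + 1 / √(w + θ)) := by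
  have hπ := pi_pos
  have hlow := two_div_pi_sq_mul_le_cos_sub_cos hw hθ
  obtain ⟨h₁, h₂⟩ := hθ
  have hw₀ : 0 < w := by linarith
  -- `(w - θ) + (w + θ) = 2 w`, so the larger of the two factors is at least `w`
  have key : ∀ p q, 0 < p → w ≤ q → 2 / π ^ 2 * (p * q) ≤ cos θ - cos w →
      1 / √(cos θ - cos w) ≤ π / √(2 * w) * (1 / √p) := fun p q hp hq h => by
    have hle : 2 * w * p / π ^ 2 ≤ cos θ - cos w := by
      refine le_trans ?_ h
      rw [div_mul_eq_mul_div, mul_comm p q, ← mul_assoc]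
      gcongr
    calc 1 / √(cos θ - cos w) ≤ 1 / √(2 * w * p / π ^ 2) :=
          one_div_le_one_div_of_le (sqrt_pos.2 (by positivity)) (sqrt_le_sqrt hle)
      _ = π / √(2 * w) * (1 / √p) := by
          rw [sqrt_div' _ (by positivity), sqrt_sq hπ.le, sqrt_mul (by linarith)]
          field_simp
  rcases le_total 0 θ with hθ | hθ
  · exact (key _ _ (by linarith) (by linarith) hlow).trans
      (mul_le_mul_of_nonneg_left (le_add_of_nonneg_right (by positivity)) (by positivity))
  · exact (key (w + θ) (w - θ) (by linarith) (by linarith)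
      (by linarith [mul_comm (w - θ) (w + θ)])).trans
      (mul_le_mul_of_nonneg_left (le_add_of_nonneg_left (by positivity)) (by positivity))

lemma one_div_sqrt_eq_zero_of_nonpos {x : ℝ} (hx : x ≤ 0) : 1 / √x = 0 := by
  rw [sqrt_eq_zero'.2 hx, div_zero]

lemma lintegral_one_div_sqrt_cos_sub_eq_zero_of_one_le {c : ℝ} (hc : 1 ≤ c) (s : Set ℝ) :
    ∫⁻ θ in s, ENNReal.ofReal (1 / √(cos θ - c)) = 0 := by
  have h : ∀ θ, ENNReal.ofReal (1 / √(cos θ - c)) = 0 := fun θ => by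
    rw [one_div_sqrt_eq_zero_of_nonpos (by linarith [cos_le_one θ]), ENNReal.ofReal_zero]
  simp only [h, lintegral_zero]

lemma ofReal_one_div_sqrt_cos_sub_cos_le_indicator {w θ : ℝ} (hw₀ : 0 ≤ w) (hw : w ≤ π / 2)
    (hθ : θ ∈ Ioo (-π) π) :
    ENNReal.ofReal (1 / √(cos θ - cos w)) ≤ (Ioo (-w) w).indicator (fun θ =>
      ENNReal.ofReal (π / √(2 * w)) *
        (ENNReal.ofReal (1 / √(w - θ)) + ENNReal.ofReal (1 / √(θ - -w)))) θ := by
  by_cases hθw : θ ∈ Ioo (-w) w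
  · rw [indicator_of_mem hθw, ← ENNReal.ofReal_add (by positivity) (by positivity),
      ← ENNReal.ofReal_mul (by positivity), sub_neg_eq_add, add_comm θ]
    exact ENNReal.ofReal_le_ofReal (one_div_sqrt_cos_sub_cos_le hw hθw)
  · have hwθ : w ≤ |θ| := by
      simp only [mem_Ioo, not_and_or, not_lt] at hθw
      rcases hθw with h | h
      · exact le_abs.2 (Or.inr (by linarith))
      · exact le_abs.2 (Or.inl h)
    have hcos : cos θ ≤ cos w := by
      rw [← cos_abs]
      exact cos_le_cos_of_nonneg_of_le_pi hw₀ (abs_le.2 ⟨hθ.1.le, hθ.2.le⟩) hwθ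
    rw [indicator_of_notMem hθw, one_div_sqrt_eq_zero_of_nonpos (sub_nonpos.2 hcos),
      ENNReal.ofReal_zero]

lemma lintegral_one_div_sqrt_cos_sub_le {c : ℝ} (hc : 0 ≤ c) :
    ∫⁻ θ in Ioo (-π) π, ENNReal.ofReal (1 / √(cos θ - c)) ≤ ENNReal.ofReal (4 * π) := by
  rcases le_or_gt 1 c with hc₁ | hc₁
  · rw [lintegral_one_div_sqrt_cos_sub_eq_zero_of_one_le hc₁]
    exact zero_le
  set w := arccos c
  have hw₀ : 0 < w := arccos_pos.2 hc₁
  rw [← cos_arccos (by linarith) hc₁.le]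
  calc ∫⁻ θ in Ioo (-π) π, ENNReal.ofReal (1 / √(cos θ - cos w))
      ≤ ∫⁻ θ, (Ioo (-w) w).indicator (fun θ => ENNReal.ofReal (π / √(2 * w)) *
          (ENNReal.ofReal (1 / √(w - θ)) + ENNReal.ofReal (1 / √(θ - -w)))) θ :=
        (setLIntegral_mono' measurableSet_Ioo fun θ hθ =>
          ofReal_one_div_sqrt_cos_sub_cos_le_indicator hw₀.le
            (arccos_le_pi_div_two.2 hc) hθ).trans (setLIntegral_le_lintegral _ _)
    _ = ENNReal.ofReal (π / √(2 * w)) *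
          (ENNReal.ofReal (2 * √(2 * w)) + ENNReal.ofReal (2 * √(2 * w))) := by
        rw [lintegral_indicator measurableSet_Ioo, lintegral_const_mul' _ _ ENNReal.ofReal_ne_top,
          lintegral_add_left (by fun_prop), lintegral_Ioo_one_div_sqrt_const_sub (by linarith),
          lintegral_Ioo_one_div_sqrt_sub_const (by linarith), show w - -w = 2 * w by ring]
    _ = ENNReal.ofReal (4 * π) := by
        rw [← ENNReal.ofReal_add (by positivity) (by positivity),
          ← ENNReal.ofReal_mul (by positivity)]
        congr 1
        field_simp
        ring

lemma sq_sub_sq_norm_polarCoord_symm_sub_ofReal (u θ : ℝ) {a r : ℝ} (ha : a ≠ 0) (hr : r ≠ 0) :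
    u ^ 2 - ‖Complex.polarCoord.symm (r, θ) - a‖ ^ 2 =
      2 * a * r * (cos θ - (r ^ 2 + a ^ 2 - u ^ 2) / (2 * a * r)) := by
  rw [Complex.sq_norm, Complex.normSq_apply]
  simp only [Complex.polarCoord_symm_apply, Complex.sub_re, Complex.sub_im, Complex.mul_re,
    Complex.mul_im, Complex.add_re, Complex.add_im, Complex.ofReal_re, Complex.ofReal_im,
    Complex.I_re, Complex.I_im]
  field_simp
  linear_combination (-r ^ 2) * sin_sq_add_cos_sq θ

@[fun_prop]
lemma Complex.continuous_polarCoord_symm : Continuous Complex.polarCoord.symm :=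
  Complex.equivRealProdCLM.symm.continuous.comp _root_.continuous_polarCoord_symm

lemma lintegral_one_div_sqrt_cos_sub_le_indicator {a u r : ℝ} (hu : 0 ≤ u) (hua : u < a)
    (hr : 0 < r) :
    ∫⁻ θ in Ioo (-π) π, ENNReal.ofReal (1 / √(cos θ - (r ^ 2 + a ^ 2 - u ^ 2) / (2 * a * r))) ≤
      (Ioi (a - u)).indicator (fun _ => ENNReal.ofReal (4 * π)) r := by
  have ha : 0 < a := hu.trans_lt hua
  rcases le_or_gt r (a - u) with hru | hru
  · rw [lintegral_one_div_sqrt_cos_sub_eq_zero_of_one_le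
      ((le_div_iff₀ (by positivity)).2 (by nlinarith))]
    exact zero_le
  · rw [indicator_of_mem (mem_Ioi.2 hru)]
    exact lintegral_one_div_sqrt_cos_sub_le (div_nonneg (by nlinarith) (by positivity))

lemma lintegral_angle_polarCoord_symm_le (w : ℝ → ℝ≥0∞) {a u r : ℝ} (hu : 0 ≤ u) (hua : u < a)
    (hr : 0 < r) :
    ∫⁻ θ in Ioo (-π) π, ENNReal.ofReal r • (w ‖Complex.polarCoord.symm (r, θ)‖ *
        ENNReal.ofReal (1 / √(u ^ 2 - ‖Complex.polarCoord.symm (r, θ) - a‖ ^ 2))) ≤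
      (Ioi (a - u)).indicator
        (fun r => ENNReal.ofReal (4 * π / √(2 * a)) * (ENNReal.ofReal √r * w r)) r := by
  have ha : 0 < a := hu.trans_lt hua
  have hr' : r * (1 / √(2 * a * r)) = √r / √(2 * a) := by
    rw [sqrt_mul (by positivity), mul_one_div, div_mul_eq_div_div, div_right_comm, div_sqrt]
  have hθ : ∀ θ, ENNReal.ofReal r • (w ‖Complex.polarCoord.symm (r, θ)‖ *
      ENNReal.ofReal (1 / √(u ^ 2 - ‖Complex.polarCoord.symm (r, θ) - a‖ ^ 2))) =
      ENNReal.ofReal (√r / √(2 * a)) * w r *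
        ENNReal.ofReal (1 / √(cos θ - (r ^ 2 + a ^ 2 - u ^ 2) / (2 * a * r))) := fun θ => by
    rw [Complex.norm_polarCoord_symm, abs_of_pos hr,
      sq_sub_sq_norm_polarCoord_symm_sub_ofReal u θ ha.ne' hr.ne', sqrt_mul (by positivity),
      ← one_div_mul_one_div, ENNReal.ofReal_mul (by positivity), ← hr',
      ENNReal.ofReal_mul hr.le, smul_eq_mul]
    ring
  simp_rw [hθ]
  rw [lintegral_const_mul _ (by fun_prop)]
  calc _ ≤ ENNReal.ofReal (√r / √(2 * a)) * w r *
        (Ioi (a - u)).indicator (fun _ => ENNReal.ofReal (4 * π)) r := by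
        gcongr
        exact lintegral_one_div_sqrt_cos_sub_le_indicator hu hua hr
    _ = _ := by
        simp only [indicator_apply]
        split_ifs
        · rw [mul_right_comm, ← ENNReal.ofReal_mul (by positivity), ← mul_assoc (ENNReal.ofReal _),
            ← ENNReal.ofReal_mul (by positivity)]
          congr 2
          ring
        · rw [mul_zero]

-- Off the ball `‖z - a‖ < u` the integrand is `w ‖z‖ * ofReal (1 / 0) = 0`.
lemma lintegral_complex_mul_one_div_sqrt_le {w : ℝ → ℝ≥0∞} (hw : Measurable w) {a u : ℝ}
    (hu : 0 ≤ u) (hua : u < a) :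
    ∫⁻ z : ℂ, w ‖z‖ * ENNReal.ofReal (1 / √(u ^ 2 - ‖z - a‖ ^ 2)) ≤
      ENNReal.ofReal (4 * π / √(2 * a)) * ∫⁻ r in Ioi (a - u), ENNReal.ofReal √r * w r := by
  rw [← Complex.lintegral_comp_polarCoord_symm, polarCoord_target, Measure.volume_eq_prod,
    setLIntegral_prod _ (by fun_prop)]
  calc _ ≤ ∫⁻ r in Ioi 0, (Ioi (a - u)).indicator
          (fun r => ENNReal.ofReal (4 * π / √(2 * a)) * (ENNReal.ofReal √r * w r)) r :=
        setLIntegral_mono' measurableSet_Ioi fun r hr =>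
          lintegral_angle_polarCoord_symm_le w hu hua hr
    _ = _ := by
        rw [lintegral_indicator measurableSet_Ioi, Measure.restrict_restrict measurableSet_Ioi,
          Ioi_inter_Ioi, sup_eq_left.2 (by linarith),
          lintegral_const_mul' _ _ ENNReal.ofReal_ne_top]

lemma exists_linearIsometryEquiv_complex_apply_eq_norm (x : EuclideanSpace ℝ (Fin 2)) :
    ∃ e : EuclideanSpace ℝ (Fin 2) ≃ₗᵢ[ℝ] ℂ, e x = ‖x‖ := by
  set e₀ := Complex.orthonormalBasisOneI.repr.symm
  refine ⟨e₀.trans (ℝ ∙ (e₀ x - (‖x‖ : ℂ)))ᗮ.reflection, ?_⟩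
  simp [Submodule.reflection_sub]

lemma lintegral_euclideanSpace_mul_one_div_sqrt_le {w : ℝ → ℝ≥0∞} (hw : Measurable w)
    (x : EuclideanSpace ℝ (Fin 2)) {u : ℝ} (hu : 0 ≤ u) (hux : u < ‖x‖) :
    ∫⁻ y, w ‖y‖ * ENNReal.ofReal (1 / √(u ^ 2 - ‖y - x‖ ^ 2)) ≤
      ENNReal.ofReal (4 * π / √(2 * ‖x‖)) * ∫⁻ r in Ioi (‖x‖ - u), ENNReal.ofReal √r * w r := by
  obtain ⟨e, he⟩ := exists_linearIsometryEquiv_complex_apply_eq_norm x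
  calc ∫⁻ y, w ‖y‖ * ENNReal.ofReal (1 / √(u ^ 2 - ‖y - x‖ ^ 2))
      = ∫⁻ z : ℂ, w ‖z‖ * ENNReal.ofReal (1 / √(u ^ 2 - ‖z - ‖x‖‖ ^ 2)) := by
        rw [← e.measurePreserving.lintegral_comp_emb e.toMeasurableEquiv.measurableEmbedding]
        simp [← he, ← map_sub]
    _ ≤ _ := lintegral_complex_mul_one_div_sqrt_le hw hu hux

lemma lintegral_ball_div_sqrt_le {f : EuclideanSpace ℝ (Fin 2) → ℝ}
    {x : EuclideanSpace ℝ (Fin 2)} {u B s β : ℝ} (hB : 0 ≤ B) (hu : 0 ≤ u) (hux : u < ‖x‖)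
    (hf : ∀ y ∈ ball x u, |f y| ≤ B * ‖y‖ ^ (-(5 / 2) : ℝ) * (‖y‖ - s) ^ (-β)) :
    ∫⁻ y in ball x u, ENNReal.ofReal (|f y| / √(u ^ 2 - ‖y - x‖ ^ 2)) ≤
      ENNReal.ofReal (B * (4 * π / √(2 * ‖x‖))) *
        ∫⁻ r in Ioi (‖x‖ - u), ENNReal.ofReal (r ^ (-2 : ℝ) * (r - s) ^ (-β)) := by
  set w : ℝ → ℝ≥0∞ := fun r => ENNReal.ofReal (r ^ (-(5 / 2) : ℝ) * (r - s) ^ (-β))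
  calc ∫⁻ y in ball x u, ENNReal.ofReal (|f y| / √(u ^ 2 - ‖y - x‖ ^ 2))
      ≤ ∫⁻ y in ball x u, ENNReal.ofReal B *
          (w ‖y‖ * ENNReal.ofReal (1 / √(u ^ 2 - ‖y - x‖ ^ 2))) :=
        setLIntegral_mono' measurableSet_ball fun y hy => by
          rw [← ENNReal.ofReal_mul' (by positivity), ← ENNReal.ofReal_mul hB, div_eq_mul_one_div,
            ← mul_assoc]
          exact ENNReal.ofReal_le_ofReal
            (mul_le_mul_of_nonneg_right ((hf y hy).trans_eq (mul_assoc _ _ _)) (by positivity))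
    _ ≤ ENNReal.ofReal B * ∫⁻ y, w ‖y‖ * ENNReal.ofReal (1 / √(u ^ 2 - ‖y - x‖ ^ 2)) := by
        rw [lintegral_const_mul' _ _ ENNReal.ofReal_ne_top]
        gcongr
        exact Measure.restrict_le_self
    _ ≤ ENNReal.ofReal B * (ENNReal.ofReal (4 * π / √(2 * ‖x‖)) *
          ∫⁻ r in Ioi (‖x‖ - u), ENNReal.ofReal √r * w r) := by
        gcongr
        exact lintegral_euclideanSpace_mul_one_div_sqrt_le (by fun_prop) x hu hux
    _ = _ := by
        rw [← mul_assoc, ← ENNReal.ofReal_mul hB]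
        congr 1
        refine setLIntegral_congr_fun measurableSet_Ioi fun r hr => ?_
        have hr : 0 < r := by linarith [mem_Ioi.1 hr]
        rw [← ENNReal.ofReal_mul (sqrt_nonneg _), ← mul_assoc, sqrt_eq_rpow, ← rpow_add hr]
        norm_num

lemma lintegral_Ioo_lintegral_Ioi_rpow_mul_rpow_sub_le {β d t : ℝ} (hβ : 0 < β) (hd : 0 < d) :
    ∫⁻ s in Ioo 0 t, ∫⁻ r in Ioi (d + s), ENNReal.ofReal (r ^ (-2 : ℝ) * (r - s) ^ (-β)) ≤
      ENNReal.ofReal (d ^ (-β) / β) := by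
  have hshift : ∀ s, ∫⁻ r in Ioi (d + s), ENNReal.ofReal (r ^ (-2 : ℝ) * (r - s) ^ (-β)) =
      ∫⁻ ρ in Ioi d, ENNReal.ofReal ((ρ + s) ^ (-2 : ℝ) * ρ ^ (-β)) := fun s => by
    simp_rw [← setLIntegral_Ioi_comp_add_right _ d s, add_sub_cancel_right]
  have hinner : ∀ ρ ∈ Ioi d, ∫⁻ s in Ioo 0 t, ENNReal.ofReal ((ρ + s) ^ (-2 : ℝ) * ρ ^ (-β)) ≤
      ENNReal.ofReal (ρ ^ (-β - 1)) := fun ρ hρ => by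
    have hρ : 0 < ρ := hd.trans hρ
    calc ∫⁻ s in Ioo 0 t, ENNReal.ofReal ((ρ + s) ^ (-2 : ℝ) * ρ ^ (-β))
        ≤ ∫⁻ s in Ioi 0, ENNReal.ofReal ((s + ρ) ^ (-2 : ℝ)) * ENNReal.ofReal (ρ ^ (-β)) := by
          refine (lintegral_mono_set Ioo_subset_Ioi_self).trans_eq ?_
          simp_rw [add_comm ρ, ENNReal.ofReal_mul' (rpow_nonneg hρ.le _)]
      _ = ENNReal.ofReal (ρ ^ (-1 : ℝ)) * ENNReal.ofReal (ρ ^ (-β)) := by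
          rw [lintegral_mul_const' _ _ ENNReal.ofReal_ne_top, setLIntegral_Ioi_comp_add_right
            (fun s => ENNReal.ofReal (s ^ (-2 : ℝ))), zero_add, lintegral_Ioi_rpow (by norm_num) hρ]
          norm_num
      _ = ENNReal.ofReal (ρ ^ (-β - 1)) := by
          rw [← ENNReal.ofReal_mul (rpow_nonneg hρ.le _), ← rpow_add hρ, neg_add_eq_sub]
  calc ∫⁻ s in Ioo 0 t, ∫⁻ r in Ioi (d + s), ENNReal.ofReal (r ^ (-2 : ℝ) * (r - s) ^ (-β))
      = ∫⁻ ρ in Ioi d, ∫⁻ s in Ioo 0 t, ENNReal.ofReal ((ρ + s) ^ (-2 : ℝ) * ρ ^ (-β)) := by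
        simp_rw [hshift]
        exact lintegral_lintegral_swap (by fun_prop)
    _ ≤ ∫⁻ ρ in Ioi d, ENNReal.ofReal (ρ ^ (-β - 1)) := setLIntegral_mono' measurableSet_Ioi hinner
    _ = ENNReal.ofReal (d ^ (-β) / β) := by
        rw [lintegral_Ioi_rpow (by linarith) hd, sub_add_cancel, neg_div_neg_eq]

theorem stmt_9_general (β : ℝ) (hβ : 0 < β) :
    ∃ C : ℝ, 0 < C ∧
      ∀ (R B : ℝ), 0 < R → 0 < B →
      ∀ F : EuclideanSpace ℝ (Fin 2) → ℝ → ℝ,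
      Measurable (fun p : EuclideanSpace ℝ (Fin 2) × ℝ => F p.1 p.2) →
      (∀ (y : EuclideanSpace ℝ (Fin 2)) (s : ℝ), 0 ≤ s → R + s < ‖y‖ →
        |F y s| ≤ B * ‖y‖ ^ (-(5 / 2) : ℝ) * (‖y‖ - s) ^ (-β)) →
      ∀ (t : ℝ) (x : EuclideanSpace ℝ (Fin 2)), 0 < t → R + t < ‖x‖ →
        ENNReal.ofReal (1 / (2 * Real.pi)) *
            ∫⁻ s in Set.Ioo 0 t, ∫⁻ y in Metric.ball x (t - s),
              ENNReal.ofReal (|F y s| / Real.sqrt ((t - s) ^ 2 - ‖y - x‖ ^ 2)) ≤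
          ENNReal.ofReal (C * B * ‖x‖ ^ (-(1 / 2) : ℝ) * (‖x‖ - t) ^ (-β)) := by
  refine ⟨2 / β, by positivity, fun R B hR hB F _ hF t x ht hxt => ?_⟩
  have hd : 0 < ‖x‖ - t := by linarith
  have hball : ∀ s ∈ Ioo 0 t, ∫⁻ y in ball x (t - s),
      ENNReal.ofReal (|F y s| / √((t - s) ^ 2 - ‖y - x‖ ^ 2)) ≤
        ENNReal.ofReal (B * (4 * π / √(2 * ‖x‖))) *
          ∫⁻ r in Ioi (‖x‖ - t + s), ENNReal.ofReal (r ^ (-2 : ℝ) * (r - s) ^ (-β)) := by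
    rintro s ⟨hs₀, hst⟩
    rw [show ‖x‖ - t + s = ‖x‖ - (t - s) by ring]
    refine lintegral_ball_div_sqrt_le hB.le (by linarith) (by linarith) fun y hy =>
      hF y s hs₀.le ?_
    linarith [norm_sub_norm_le x y, norm_sub_rev x y, mem_ball_iff_norm.1 hy]
  calc _ ≤ ENNReal.ofReal (1 / (2 * π)) * (ENNReal.ofReal (B * (4 * π / √(2 * ‖x‖))) *
          ENNReal.ofReal ((‖x‖ - t) ^ (-β) / β)) := by
        gcongr
        refine (setLIntegral_mono' measurableSet_Ioo hball).trans ?_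
        rw [lintegral_const_mul' _ _ ENNReal.ofReal_ne_top]
        gcongr
        exact lintegral_Ioo_lintegral_Ioi_rpow_mul_rpow_sub_le hβ hd
    _ ≤ _ := by
        rw [← ENNReal.ofReal_mul (by positivity), ← ENNReal.ofReal_mul (by positivity)]
        refine ENNReal.ofReal_le_ofReal ?_
        rw [rpow_neg (norm_nonneg x), ← sqrt_eq_rpow]
        calc _ = 2 / β * B * (√(2 * ‖x‖))⁻¹ * (‖x‖ - t) ^ (-β) := by
              field_simp
              norm_num
          _ ≤ _ := by
              gcongr
              · exact sqrt_pos.2 (by linarith)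
              · linarith

/-- The estimate of the term `I₃` in the proof of Lemma `lm1`: if the forcing term satisfies
`|F(y,s)| ≤ B |y|^{-5/2} (|y| - s)^{-β}` whenever `s ≥ 0` and `|y| > R + s`, then
`(1/(2π)) ∫₀^t ∫_{B(x,t-s)} |F(y,s)| / √((t-s)² - |y-x|²) dy ds ≤
  C B |x|^{-1/2} (|x| - t)^{-β}` whenever `t > 0` and `|x| > R + t`,
with `C` depending only on `β`. -/
theorem stmt_9 (β : ℝ) (hβ : 0 < β) (hβ' : β < 1 / 2) :
    ∃ C : ℝ, 0 < C ∧
      ∀ (R B : ℝ), 0 < R → 0 < B →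
      ∀ F : EuclideanSpace ℝ (Fin 2) → ℝ → ℝ,
      Measurable (fun p : EuclideanSpace ℝ (Fin 2) × ℝ => F p.1 p.2) →
      (∀ (y : EuclideanSpace ℝ (Fin 2)) (s : ℝ), 0 ≤ s → R + s < ‖y‖ →
        |F y s| ≤ B * ‖y‖ ^ (-(5 / 2) : ℝ) * (‖y‖ - s) ^ (-β)) →
      ∀ (t : ℝ) (x : EuclideanSpace ℝ (Fin 2)), 0 < t → R + t < ‖x‖ →
        ENNReal.ofReal (1 / (2 * Real.pi)) *
            ∫⁻ s in Set.Ioo 0 t, ∫⁻ y in Metric.ball x (t - s),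
              ENNReal.ofReal (|F y s| / Real.sqrt ((t - s) ^ 2 - ‖y - x‖ ^ 2)) ≤
          ENNReal.ofReal (C * B * ‖x‖ ^ (-(1 / 2) : ℝ) * (‖x‖ - t) ^ (-β)) :=
  stmt_9_general β hβ
end

section
/- Let t₀ ∈ ℝ and let w : {(r,t) : r > 0, t − t₀ > r} → ℝ be twice continuously differentiable and satisfy ∂ₜ²w − ∂ᵣ²w − (1/r)∂ᵣw = −|w|⁴w on this cone (the radial form of the quintic wave equation ∂ₜ²u − Δu = −|u|⁴u on ℝ²). Define v(s, τ) = e^{τ/2} · w(e^{τ} sinh s, t₀ + e^{τ} cosh s) for s > 0 and τ ∈ ℝ. Then v satisfies ∂_τ²v − ∂ₛ²v − (cosh s / sinh s) ∂ₛ v − (1/4) v = −|v|⁴v for all s > 0 and τ ∈ ℝ. -/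
/-!
Write `X = r ∂ᵣ + (t - t₀) ∂ₜ` (dilations about the vertex of the cone) and
`Y = (t - t₀) ∂ᵣ + r ∂ₜ` (Lorentz boosts). In the coordinates `(s, τ)` the `τ`-lines are integral
curves of `X` and the `s`-lines integral curves of `Y`; as `DX = id` and `DY ∘ Y = X`, the second
derivatives of `w` along them are `D²w(X, X) + Dw(X)` and `D²w(Y, Y) + Dw(X)`, whose difference
is `((t - t₀)² - r²)(∂ₜ²w - ∂ᵣ²w) = e^{2τ}(∂ₜ²w - ∂ᵣ²w)`. The weight `e^{τ/2}` turns `∂_τ²` into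
`∂_τ² + ∂_τ + 1/4`, which cancels the shift and leaves `Dw(X) - coth s · Dw(Y) = -e^{2τ} ∂ᵣw / r`.
So the shifted operator applied to `v` is `e^{5τ/2}` times the radial wave operator applied to `w`,
and `e^{5τ/2} |w|⁴w = |v|⁴v`.
-/

open Real Topology

section IntegralCurve

variable {E : Type*} [NormedAddCommGroup E] [NormedSpace ℝ E]
  {F : E → ℝ} {γ : ℝ → E} {V : E → E} {V' : E →L[ℝ] E} {x : ℝ}

theorem eventually_hasDerivAt_comp_integralCurve (hF : ContDiffAt ℝ 1 F (γ x))
    (hγ : ∀ᶠ y in 𝓝 x, HasDerivAt γ (V (γ y)) y) :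
    ∀ᶠ y in 𝓝 x, HasDerivAt (F ∘ γ) (fderiv ℝ F (γ y) (V (γ y))) y := by
  have hγc : ContinuousAt γ x := hγ.self_of_nhds.continuousAt
  filter_upwards [hγ, hγc.eventually (hF.eventually (by simp))] with y hγy hFy
  exact (hFy.differentiableAt one_ne_zero).hasFDerivAt.comp_hasDerivAt y hγy

theorem hasDerivAt_deriv_comp_integralCurve (hF : ContDiffAt ℝ 2 F (γ x))
    (hγ : ∀ᶠ y in 𝓝 x, HasDerivAt γ (V (γ y)) y) (hV : HasFDerivAt V V' (γ x)) :
    HasDerivAt (deriv (F ∘ γ))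
      (fderiv ℝ (fderiv ℝ F) (γ x) (V (γ x)) (V (γ x)) + fderiv ℝ F (γ x) (V' (V (γ x)))) x := by
  have hderiv : deriv (F ∘ γ) =ᶠ[𝓝 x] fun y => fderiv ℝ F (γ y) (V (γ y)) :=
    (eventually_hasDerivAt_comp_integralCurve (hF.of_le one_le_two) hγ).mono fun _ hy => hy.deriv
  have hF' : HasFDerivAt (fderiv ℝ F) (fderiv ℝ (fderiv ℝ F) (γ x)) (γ x) :=
    ((hF.fderiv_right le_rfl).differentiableAt one_ne_zero).hasFDerivAt
  have hγx := hγ.self_of_nhds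
  exact ((hF'.comp_hasDerivAt x hγx).clm_apply (hV.comp_hasDerivAt x hγx)).congr_of_eventuallyEq
    hderiv

end IntegralCurve

theorem dilation_sub_boost_eq_radialWave (B : ℝ × ℝ →L[ℝ] ℝ × ℝ →L[ℝ] ℝ) (L : ℝ × ℝ →L[ℝ] ℝ)
    {r : ℝ} (hr : r ≠ 0) (T : ℝ) :
    B (r, T) (r, T) - B (T, r) (T, r) + L (r, T) - T / r * L (T, r) =
      (T ^ 2 - r ^ 2) * (B (0, 1) (0, 1) - B (1, 0) (1, 0) - 1 / r * L (1, 0)) := by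
  have hab (a b : ℝ) : ((a, b) : ℝ × ℝ) = a • (1, 0) + b • (0, 1) := by simp
  rw [hab r T, hab T r]
  simp only [map_add, map_smul, add_apply, smul_apply, smul_eq_mul]
  field_simp
  ring

section PartialDerivatives

variable {f : ℝ → ℝ → ℝ} {p : ℝ × ℝ}

theorem deriv_fst_eq_fderiv (hf : DifferentiableAt ℝ (fun q : ℝ × ℝ => f q.1 q.2) p) :
    deriv (fun r => f r p.2) p.1 = fderiv ℝ (fun q : ℝ × ℝ => f q.1 q.2) p (1, 0) :=
  (hf.hasFDerivAt.comp_hasDerivAt (f := fun r => (r, p.2)) p.1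
    ((hasDerivAt_id p.1).prodMk (hasDerivAt_const p.1 p.2))).deriv

theorem deriv_deriv_fst_eq_fderiv_fderiv
    (hf : ContDiffAt ℝ 2 (fun q : ℝ × ℝ => f q.1 q.2) p) :
    deriv (fun r => deriv (fun r' => f r' p.2) r) p.1 =
      fderiv ℝ (fderiv ℝ fun q : ℝ × ℝ => f q.1 q.2) p (1, 0) (1, 0) := by
  have := hasDerivAt_deriv_comp_integralCurve (γ := fun r => (r, p.2)) (V := fun _ => (1, 0))
    (V' := 0) hf (.of_forall fun r => (hasDerivAt_id r).prodMk (hasDerivAt_const r p.2))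
    (hasFDerivAt_const _ _)
  simpa [Function.comp_def] using this.deriv

theorem deriv_deriv_snd_eq_fderiv_fderiv
    (hf : ContDiffAt ℝ 2 (fun q : ℝ × ℝ => f q.1 q.2) p) :
    deriv (deriv (f p.1)) p.2 =
      fderiv ℝ (fderiv ℝ fun q : ℝ × ℝ => f q.1 q.2) p (0, 1) (0, 1) := by
  have := hasDerivAt_deriv_comp_integralCurve (γ := fun t => (p.1, t)) (V := fun _ => (0, 1))
    (V' := 0) hf (.of_forall fun t => (hasDerivAt_const t p.1).prodMk (hasDerivAt_id t))
    (hasFDerivAt_const _ _)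
  simpa [Function.comp_def] using this.deriv

end PartialDerivatives

theorem deriv_deriv_exp_mul {g : ℝ → ℝ} {g'' : ℝ} (c x : ℝ)
    (hg : ∀ᶠ y in 𝓝 x, DifferentiableAt ℝ g y) (hg' : HasDerivAt (deriv g) g'' x) :
    deriv (deriv fun y => exp (c * y) * g y) x =
      exp (c * x) * (g'' + 2 * c * deriv g x + c ^ 2 * g x) := by
  have he (y : ℝ) : HasDerivAt (fun y => exp (c * y)) (exp (c * y) * c) y := by
    simpa using ((hasDerivAt_id y).const_mul c).exp
  have hderiv : deriv (fun y => exp (c * y) * g y) =ᶠ[𝓝 x]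
      fun y => exp (c * y) * c * g y + exp (c * y) * deriv g y :=
    hg.mono fun y hy => ((he y).mul hy.hasDerivAt).deriv
  rw [hderiv.deriv_eq]
  refine ((((he x).mul_const c).mul hg.self_of_nhds.hasDerivAt).add
    ((he x).mul hg')).deriv.trans ?_
  ring

noncomputable def hypCoords (t₀ s τ : ℝ) : ℝ × ℝ := (exp τ * sinh s, t₀ + exp τ * cosh s)

theorem isOpen_lightCone (t₀ : ℝ) : IsOpen {p : ℝ × ℝ | 0 < p.1 ∧ p.1 < p.2 - t₀} :=
  (isOpen_lt continuous_const continuous_fst).and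
    (isOpen_lt continuous_fst (continuous_snd.sub continuous_const))

theorem hypCoords_mem_lightCone (t₀ τ : ℝ) {s : ℝ} (hs : 0 < s) :
    hypCoords t₀ s τ ∈ {p : ℝ × ℝ | 0 < p.1 ∧ p.1 < p.2 - t₀} := by
  refine ⟨mul_pos (exp_pos τ) (sinh_pos_iff.2 hs), ?_⟩
  simpa [hypCoords] using mul_lt_mul_of_pos_left (sinh_lt_cosh s) (exp_pos τ)

theorem hasDerivAt_hypCoords_dilation (t₀ s τ : ℝ) :
    HasDerivAt (hypCoords t₀ s) (hypCoords t₀ s τ - (0, t₀)) τ := by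
  convert ((hasDerivAt_exp τ).mul_const (sinh s)).prodMk
    (((hasDerivAt_exp τ).mul_const (cosh s)).const_add t₀) using 1
  · rfl
  · simp [hypCoords]

theorem hasDerivAt_hypCoords_boost (t₀ s τ : ℝ) :
    HasDerivAt (fun s' => hypCoords t₀ s' τ) (hypCoords t₀ s τ - (0, t₀)).swap s := by
  convert ((hasDerivAt_sinh s).const_mul (exp τ)).prodMk
    (((hasDerivAt_cosh s).const_mul (exp τ)).const_add t₀) using 1
  · rfl
  · simp [hypCoords]

theorem shiftedWave_exp_half_mul_comp_hypCoords_eq (F : ℝ × ℝ → ℝ) (t₀ s τ : ℝ)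
    (hF : ContDiffAt ℝ 2 F (hypCoords t₀ s τ)) (u : ℝ → ℝ → ℝ)
    (hu : ∀ s τ, u s τ = exp (τ / 2) * F (hypCoords t₀ s τ)) :
    let X := hypCoords t₀ s τ - (0, t₀)
    deriv (deriv (u s)) τ - deriv (fun s' => deriv (fun s'' => u s'' τ) s') s
        - (cosh s / sinh s) * deriv (fun s' => u s' τ) s - (1 / 4) * u s τ =
      exp (τ / 2) * (fderiv ℝ (fderiv ℝ F) (hypCoords t₀ s τ) X X
        - fderiv ℝ (fderiv ℝ F) (hypCoords t₀ s τ) X.swap X.swap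
        + fderiv ℝ F (hypCoords t₀ s τ) X
        - cosh s / sinh s * fderiv ℝ F (hypCoords t₀ s τ) X.swap) := by
  have hτ₁ := eventually_hasDerivAt_comp_integralCurve (V := fun q => q - (0, t₀))
    (hF.of_le one_le_two) (.of_forall (hasDerivAt_hypCoords_dilation t₀ s))
  have hτ₂ := hasDerivAt_deriv_comp_integralCurve (V := fun q => q - (0, t₀)) hF
    (.of_forall (hasDerivAt_hypCoords_dilation t₀ s)) ((hasFDerivAt_id _).sub_const (0, t₀))
  have hs₁ := eventually_hasDerivAt_comp_integralCurve (γ := fun s' => hypCoords t₀ s' τ)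
    (V := fun q => (q - (0, t₀)).swap) (hF.of_le one_le_two)
    (.of_forall fun s' => hasDerivAt_hypCoords_boost t₀ s' τ)
  have hs₂ := hasDerivAt_deriv_comp_integralCurve (γ := fun s' => hypCoords t₀ s' τ)
    (V := fun q => (q - (0, t₀)).swap) hF (.of_forall fun s' => hasDerivAt_hypCoords_boost t₀ s' τ)
    ((ContinuousLinearEquiv.prodComm ℝ ℝ ℝ).hasFDerivAt.comp _
      ((hasFDerivAt_id _).sub_const (0, t₀)))
  have hu_τ : u s = fun τ' => exp (2⁻¹ * τ') * (F ∘ hypCoords t₀ s) τ' :=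
    funext fun τ' => by rw [hu, div_eq_inv_mul]; rfl
  have hu_s : (fun s' => u s' τ) =
      fun s' => exp (τ / 2) * (F ∘ fun s' => hypCoords t₀ s' τ) s' :=
    funext fun s' => hu s' τ
  rw [hu_τ, hu_s, deriv_const_mul_field', deriv_const_mul_field']
  beta_reduce
  rw [deriv_deriv_exp_mul _ _ (hτ₁.mono fun _ h => h.differentiableAt) hτ₂,
    hτ₁.self_of_nhds.deriv, hs₂.deriv, hs₁.self_of_nhds.deriv, ← div_eq_inv_mul]
  simp only [ContinuousLinearMap.id_apply, ContinuousLinearMap.comp_apply,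
    ContinuousLinearEquiv.coe_coe, ContinuousLinearEquiv.prodComm_apply, Prod.swap_swap,
    Function.comp_apply]
  ring

theorem shiftedWave_exp_half_mul_comp_hypCoords (F : ℝ × ℝ → ℝ) (t₀ : ℝ) {s : ℝ} (hs : s ≠ 0)
    (τ : ℝ) (hF : ContDiffAt ℝ 2 F (hypCoords t₀ s τ)) (u : ℝ → ℝ → ℝ)
    (hu : ∀ s τ, u s τ = exp (τ / 2) * F (hypCoords t₀ s τ)) :
    deriv (deriv (u s)) τ - deriv (fun s' => deriv (fun s'' => u s'' τ) s') s
        - (cosh s / sinh s) * deriv (fun s' => u s' τ) s - (1 / 4) * u s τ =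
      exp (τ / 2) ^ 5 * (fderiv ℝ (fderiv ℝ F) (hypCoords t₀ s τ) (0, 1) (0, 1)
        - fderiv ℝ (fderiv ℝ F) (hypCoords t₀ s τ) (1, 0) (1, 0)
        - 1 / (hypCoords t₀ s τ).1 * fderiv ℝ F (hypCoords t₀ s τ) (1, 0)) := by
  rw [shiftedWave_exp_half_mul_comp_hypCoords_eq F t₀ s τ hF u hu]
  set r := exp τ * sinh s
  set T := exp τ * cosh s
  have hX : hypCoords t₀ s τ - (0, t₀) = (r, T) := by simp [hypCoords, r, T]
  have hr : r ≠ 0 := mul_ne_zero (exp_ne_zero τ) (sinh_ne_zero.2 hs)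
  have hcoth : cosh s / sinh s = T / r := (mul_div_mul_left _ _ (exp_ne_zero τ)).symm
  have hTr : T ^ 2 - r ^ 2 = exp τ ^ 2 := by
    rw [mul_pow, mul_pow, ← mul_sub, cosh_sq_sub_sinh_sq, mul_one]
  have h_five : exp (τ / 2) ^ 5 = exp (τ / 2) * exp τ ^ 2 := by
    rw [← exp_nat_mul, ← exp_nat_mul, ← exp_add]; ring_nf
  rw [hX, Prod.swap_prod_mk, hcoth, h_five, show (hypCoords t₀ s τ).1 = r from rfl, ← hTr,
    dilation_sub_boost_eq_radialWave _ _ hr T]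
  ring

/-- Proposition 6.8 (`translation`, radial form): if `w(r,t)` solves the radial quintic wave
equation `∂ₜ²w - ∂ᵣ²w - (1/r)∂ᵣw = -|w|⁴w` in the forward light cone `{t - t₀ > r > 0}`,
then `v(s,τ) = e^{τ/2} w(e^τ sinh s, t₀ + e^τ cosh s)` solves the radial defocusing quintic
shifted wave equation `∂_τ²v - ∂ₛ²v - (cosh s/sinh s)∂ₛv - (1/4)v = -|v|⁴v` on `ℍ² × ℝ`. -/
theorem stmt_12 (t₀ : ℝ) (w : ℝ → ℝ → ℝ)
    (hw : ContDiffOn ℝ 2 (fun p : ℝ × ℝ => w p.1 p.2)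
      {p : ℝ × ℝ | 0 < p.1 ∧ p.1 < p.2 - t₀})
    (hpde : ∀ r t : ℝ, 0 < r → r < t - t₀ →
      deriv (deriv (w r)) t - deriv (fun r' => deriv (fun r'' => w r'' t) r') r
        - (1 / r) * deriv (fun r' => w r' t) r = -(|w r t| ^ 4 * w r t))
    (v : ℝ → ℝ → ℝ)
    (hv : ∀ s τ : ℝ, v s τ =
      Real.exp (τ / 2) * w (Real.exp τ * Real.sinh s) (t₀ + Real.exp τ * Real.cosh s)) :
    ∀ s τ : ℝ, 0 < s →
      deriv (deriv (v s)) τ - deriv (fun s' => deriv (fun s'' => v s'' τ) s') s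
        - (Real.cosh s / Real.sinh s) * deriv (fun s' => v s' τ) s
        - (1 / 4) * v s τ = -(|v s τ| ^ 4 * v s τ) := by
  intro s τ hs
  set p := hypCoords t₀ s τ
  have hp : p ∈ {p : ℝ × ℝ | 0 < p.1 ∧ p.1 < p.2 - t₀} := hypCoords_mem_lightCone t₀ τ hs
  have hF : ContDiffAt ℝ 2 (fun q : ℝ × ℝ => w q.1 q.2) p :=
    hw.contDiffAt ((isOpen_lightCone t₀).mem_nhds hp)
  have hwave := hpde p.1 p.2 hp.1 hp.2
  rw [deriv_deriv_snd_eq_fderiv_fderiv hF, deriv_deriv_fst_eq_fderiv_fderiv hF,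
    deriv_fst_eq_fderiv (hF.differentiableAt two_ne_zero)] at hwave
  have hv_p : v s τ = exp (τ / 2) * w p.1 p.2 := hv s τ
  rw [shiftedWave_exp_half_mul_comp_hypCoords _ t₀ hs.ne' τ hF v hv, hwave, hv_p, abs_mul,
    abs_of_pos (exp_pos _)]
  ring
end
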